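/- arXiv:0709.3140 — 6 statements merged into one kernel-verified Lean document; each statement's English description precedes it below -/
import Mathlib

section
/- For a finite simple graph G of order n, E(G) = rank(G) holds if and only if G is a disjoint union of (r/2) copies of K₂ and (n−r) isolated vertices for some even nonnegative integer r; equivalently, E(G) = rank(G) if and only if every vertex of G has degree at most 1. -/
set_option linter.unusedSectionVars false

open Finset SimpleGraph

namespace GraphEnergy

variable {V : Type*} [Fintype V] [DecidableEq V]

/-- The real adjacency matrix of a simple graph. -/
noncomputable def adjMat (G : SimpleGraph V) : Matrix V V ℝ :=
  letI := Classical.decRel G.Adj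
  G.adjMatrix ℝ

theorem adjMat_isHermitian (G : SimpleGraph V) : (adjMat G).IsHermitian := by
  letI := Classical.decRel G.Adj
  ext i j
  simp [adjMat, Matrix.conjTranspose_apply, SimpleGraph.adjMatrix_apply, SimpleGraph.adj_comm]

/-- The eigenvalues (with multiplicity) of the real adjacency matrix of `G`, indexed by `V`. -/
noncomputable def eig (G : SimpleGraph V) : V → ℝ :=
  (adjMat_isHermitian G).eigenvalues

/-- The energy of a graph: the sum of the absolute values of its adjacency eigenvalues. -/
noncomputable def energy (G : SimpleGraph V) : ℝ :=
  ∑ i, |eig G i|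

/-- The rank of the adjacency matrix of `G` over `ℝ`. -/
noncomputable def grank (G : SimpleGraph V) : ℕ :=
  (adjMat G).rank

/-- A disjoint union of `a` copies of `K₂` together with `b` isolated vertices. -/
def kTwoUnion (a b : ℕ) : SimpleGraph (Fin a × Fin 2 ⊕ Fin b) :=
  SimpleGraph.fromRel (fun x y =>
    ∃ i : Fin a, ∃ p q : Fin 2, p ≠ q ∧ x = Sum.inl (i, p) ∧ y = Sum.inl (i, q))


section Aux
open Polynomial Matrix

variable {n : Type*} [Fintype n] [DecidableEq n] {A : Matrix n n ℝ}



/-- charpoly is invariant under unitary conjugation (similarity). -/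
theorem charpoly_unitary_conj (U : Matrix.unitaryGroup n ℝ) (D : Matrix n n ℝ) :
    ((U : Matrix n n ℝ) * D * (star U : Matrix n n ℝ)).charpoly = D.charpoly := by
  have hU : (U : Matrix n n ℝ) * (star U : Matrix n n ℝ) = 1 :=
    Matrix.mem_unitaryGroup_iff.mp U.2
  have hU' : (star U : Matrix n n ℝ) * (U : Matrix n n ℝ) = 1 :=
    Matrix.mem_unitaryGroup_iff'.mp U.2
  set f := (C : ℝ →+* ℝ[X])
  set P := f.mapMatrix (U : Matrix n n ℝ) with hP
  set Q := f.mapMatrix (star U : Matrix n n ℝ) with hQ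
  have hPQ : P * Q = 1 := by rw [hP, hQ, ← _root_.map_mul, hU, _root_.map_one]
  have hQP : Q * P = 1 := by rw [hP, hQ, ← _root_.map_mul, hU', _root_.map_one]
  have key : ((U : Matrix n n ℝ) * D * (star U : Matrix n n ℝ)).charmatrix
      = P * D.charmatrix * Q := by
    rw [Matrix.charmatrix, Matrix.charmatrix]
    rw [mul_sub, sub_mul]
    congr 1
    · -- P * scalar X * Q = scalar X
      rw [Matrix.scalar_apply, ← Matrix.smul_one_eq_diagonal, Matrix.mul_smul, mul_one,
        Matrix.smul_mul, hPQ]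
    · simp [hP, hQ, ← _root_.map_mul]; rfl
  rw [Matrix.charpoly, key, Matrix.det_mul, Matrix.det_mul, mul_comm,
    ← mul_assoc, ← Matrix.det_mul, hQP, Matrix.det_one, one_mul, Matrix.charpoly]

theorem charpoly_diagonal (d : n → ℝ) :
    (Matrix.diagonal d).charpoly = ∏ i, (X - C (d i)) := by
  have h : (Matrix.diagonal d).charmatrix = Matrix.diagonal (fun i => X - C (d i)) := by
    ext i j
    by_cases h : i = j
    · subst h; rw [Matrix.charmatrix_apply_eq, Matrix.diagonal_apply_eq, Matrix.diagonal_apply_eq]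
    · rw [Matrix.charmatrix_apply_ne _ _ _ h, Matrix.diagonal_apply_ne _ h,
        Matrix.diagonal_apply_ne _ h, map_zero, neg_zero]
  rw [Matrix.charpoly, h, Matrix.det_diagonal]

theorem charpoly_eq_prod (hA : A.IsHermitian) :
    A.charpoly = ∏ i, (X - C (hA.eigenvalues i)) := by
  conv_lhs => rw [hA.spectral_theorem]
  rw [Unitary.conjStarAlgAut_apply, charpoly_unitary_conj hA.eigenvectorUnitary, show RCLike.ofReal ∘ hA.eigenvalues
    = hA.eigenvalues from rfl, charpoly_diagonal]

theorem conj_pow (U : Matrix.unitaryGroup n ℝ) (D : Matrix n n ℝ) (k : ℕ) :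
    ((U : Matrix n n ℝ) * D * (star U : Matrix n n ℝ)) ^ k
      = (U : Matrix n n ℝ) * D ^ k * (star U : Matrix n n ℝ) := by
  induction k with
  | zero => simp [Matrix.mem_unitaryGroup_iff.mp U.2]
  | succ k ih =>
      rw [pow_succ, ih, pow_succ]
      have hU' : (star U : Matrix n n ℝ) * (U : Matrix n n ℝ) = 1 :=
        Matrix.mem_unitaryGroup_iff'.mp U.2
      calc (U : Matrix n n ℝ) * D ^ k * (star U : Matrix n n ℝ) *
            ((U : Matrix n n ℝ) * D * (star U : Matrix n n ℝ))
          = (U : Matrix n n ℝ) * D ^ k * ((star U : Matrix n n ℝ) * (U : Matrix n n ℝ)) * D *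
            (star U : Matrix n n ℝ) := by simp only [mul_assoc]
        _ = (U : Matrix n n ℝ) * (D ^ k * D) * (star U : Matrix n n ℝ) := by
            rw [hU']; simp only [mul_one, mul_assoc]

theorem trace_pow (hA : A.IsHermitian) (k : ℕ) :
    (A ^ k).trace = ∑ i, hA.eigenvalues i ^ k := by
  conv_lhs => rw [hA.spectral_theorem]
  rw [Unitary.conjStarAlgAut_apply, conj_pow, Matrix.trace_mul_cycle, Matrix.mem_unitaryGroup_iff'.mp hA.eigenvectorUnitary.2,
    one_mul, show RCLike.ofReal ∘ hA.eigenvalues = hA.eigenvalues from rfl,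
    Matrix.diagonal_pow, Matrix.trace_diagonal]
  simp [Pi.pow_apply]



theorem esymm_eq_prod (l : n → ℝ) :
    let S := Finset.univ.filter (fun i => l i ≠ 0)
    (Finset.univ.val.map l).esymm S.card = ∏ i ∈ S, l i := by
  intro S
  rw [Finset.esymm_map_val]
  rw [Finset.sum_eq_single_of_mem S
    (Finset.mem_powersetCard.mpr ⟨Finset.subset_univ _, rfl⟩)]
  intro t ht hne
  rw [Finset.mem_powersetCard] at ht
  by_cases hsub : t ⊆ S
  · exact absurd (Finset.eq_of_subset_of_card_le hsub (le_of_eq ht.2.symm)) hne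
  · obtain ⟨i, hit, hiS⟩ := Finset.not_subset.mp hsub
    have : l i = 0 := by
      by_contra h
      exact hiS (Finset.mem_filter.mpr ⟨Finset.mem_univ _, h⟩)
    exact Finset.prod_eq_zero hit this


theorem coeff_prod_X_sub_C (l : n → ℝ) :
    let S := Finset.univ.filter (fun i => l i ≠ 0)
    (∏ i, (X - C (l i))).coeff (Fintype.card n - S.card) =
      (-1) ^ S.card * ∏ i ∈ S, l i := by
  intro S
  have h3 : Multiset.card (Finset.univ.val.map l) = Fintype.card n := by
    rw [Multiset.card_map]; rfl
  have hcard : S.card ≤ Fintype.card n := Finset.card_filter_le _ _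
  have h1 : (∏ i, (X - C (l i))) = ((Finset.univ.val.map l).map fun t => X - C t).prod := by
    rw [Multiset.map_map]; rfl
  have h2 : Fintype.card n - S.card ≤ Multiset.card (Finset.univ.val.map l) := by
    rw [h3]; omega
  rw [h1, Multiset.prod_X_sub_C_coeff _ h2]
  rw [h3, Nat.sub_sub_self hcard, esymm_eq_prod l]



theorem all_eq_one_of_sum_card_prod_ge {S : Finset n} {f : n → ℝ}
    (hpos : ∀ i ∈ S, 0 < f i) (hsum : ∑ i ∈ S, f i = S.card)
    (hprod : 1 ≤ ∏ i ∈ S, f i) : ∀ i ∈ S, f i = 1 := by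
  by_contra hc
  push_neg at hc
  obtain ⟨i₀, hi₀, hne⟩ := hc
  have hlog : (0 : ℝ) ≤ ∑ i ∈ S, Real.log (f i) := by
    rw [← Real.log_prod (fun i hi => (hpos i hi).ne')]
    exact Real.log_nonneg hprod
  have hstrict : ∑ i ∈ S, Real.log (f i) < ∑ i ∈ S, (f i - 1) := by
    refine Finset.sum_lt_sum (fun i hi => Real.log_le_sub_one_of_pos (hpos i hi))
      ⟨i₀, hi₀, Real.log_lt_sub_one_of_pos (hpos i₀ hi₀) hne⟩
  rw [Finset.sum_sub_distrib, hsum, Finset.sum_const, nsmul_eq_mul, mul_one, sub_self] at hstrict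
  linarith


end Aux

section GraphAux
open Polynomial Matrix

variable (G : SimpleGraph V) [DecidableRel G.Adj]

theorem adjMat_eq : adjMat G = G.adjMatrix ℝ := by
  ext i j
  by_cases h : G.Adj i j
  · simp [adjMat, h]
  · simp [adjMat, h]

theorem adjMat_eq_map : adjMat G = (G.adjMatrix ℤ).map (Int.castRingHom ℝ) := by
  ext i j
  by_cases h : G.Adj i j
  · simp [adjMat, h]
  · simp [adjMat, h]

theorem exists_int_coeff (k : ℕ) : ∃ z : ℤ, (adjMat G).charpoly.coeff k = (z : ℝ) := by
  rw [adjMat_eq_map, Matrix.charpoly_map]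
  exact ⟨(G.adjMatrix ℤ).charpoly.coeff k, Polynomial.coeff_map _ _⟩

theorem grank_card : (adjMat G).rank = (univ.filter (fun i => eig G i ≠ 0)).card := by
  rw [(adjMat_isHermitian G).rank_eq_card_non_zero_eigs, Fintype.card_subtype]
  rfl

theorem prod_abs_ge_one (hne : (univ.filter (fun i => eig G i ≠ 0)).Nonempty) :
    1 ≤ ∏ i ∈ univ.filter (fun i => eig G i ≠ 0), |eig G i| := by
  set S := univ.filter (fun i => eig G i ≠ 0) with hS
  obtain ⟨z, hz⟩ := exists_int_coeff G (Fintype.card V - S.card)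
  have hcp := charpoly_eq_prod (adjMat_isHermitian G)
  have hco : (adjMat G).charpoly.coeff (Fintype.card V - S.card)
      = (-1) ^ S.card * ∏ i ∈ S, eig G i := by
    rw [hcp]; exact coeff_prod_X_sub_C (eig G)
  have hprod_ne : (∏ i ∈ S, eig G i) ≠ 0 := by
    refine Finset.prod_ne_zero_iff.mpr ?_
    intro i hi
    exact (Finset.mem_filter.mp hi).2
  have hz_ne : z ≠ 0 := by
    rintro rfl
    rw [hz] at hco
    simp only [Int.cast_zero] at hco
    rcases mul_eq_zero.mp hco.symm with h | h
    · exact pow_ne_zero _ (neg_ne_zero.mpr one_ne_zero) h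
    · exact hprod_ne h
  have h1 : (1 : ℝ) ≤ |(z : ℝ)| := by
    rw [← Int.cast_abs]
    exact_mod_cast Int.one_le_abs hz_ne
  calc (1 : ℝ) ≤ |(z : ℝ)| := h1
    _ = |(adjMat G).charpoly.coeff (Fintype.card V - S.card)| := by rw [hz]
    _ = |∏ i ∈ S, eig G i| := by rw [hco, abs_mul, abs_pow, abs_neg, abs_one, one_pow, one_mul]
    _ = ∏ i ∈ S, |eig G i| := (Finset.abs_prod _ _)

variable (G : SimpleGraph V) [DecidableRel G.Adj]

theorem energy_eq_sum_S :
    energy G = ∑ i ∈ univ.filter (fun i => eig G i ≠ 0), |eig G i| := by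
  rw [energy, eq_comm]
  refine Finset.sum_subset (Finset.subset_univ _) ?_
  intro i _ hi
  simp only [Finset.mem_filter, Finset.mem_univ, true_and, not_not] at hi
  rw [hi, abs_zero]

theorem trace_sq : (adjMat G ^ 2).trace = ∑ v, (G.degree v : ℝ) := by
  rw [pow_two, Matrix.trace]
  congr 1
  ext v
  rw [Matrix.diag_apply, adjMat_eq, G.adjMatrix_mul_self_apply_self]

theorem abs_eig_eq (h : energy G = grank G) :
    ∀ i, eig G i = 0 ∨ |eig G i| = 1 := by
  set S := univ.filter (fun i => eig G i ≠ 0) with hS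
  intro i
  by_cases hi : eig G i = 0
  · exact Or.inl hi
  right
  rcases Finset.eq_empty_or_nonempty S with hSe | hSne
  · exfalso
    exact (Finset.eq_empty_iff_forall_notMem.mp hSe i)
      (Finset.mem_filter.mpr ⟨Finset.mem_univ _, hi⟩)
  have hsum : ∑ j ∈ S, |eig G j| = S.card := by
    rw [← energy_eq_sum_S, h]
    rw [grank, grank_card]
  have key := all_eq_one_of_sum_card_prod_ge
    (f := fun j => |eig G j|) (S := S)
    (fun j hj => abs_pos.mpr (Finset.mem_filter.mp hj).2)
    hsum (prod_abs_ge_one G hSne)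
  exact key i (Finset.mem_filter.mpr ⟨Finset.mem_univ _, hi⟩)

theorem degree_le_one_of_energy (h : energy G = grank G) : ∀ v, G.degree v ≤ 1 := by
  have habs := abs_eig_eq G h
  have h42 : ∑ i, eig G i ^ 4 = ∑ i, eig G i ^ 2 := by
    refine Finset.sum_congr rfl fun i _ => ?_
    rcases habs i with h0 | h1
    · rw [h0]; ring
    · have : eig G i ^ 2 = 1 := by
        have := sq_abs (eig G i)
        rw [h1] at this
        linarith [this]
      rw [show (4 : ℕ) = 2 * 2 from rfl, pow_mul, this]; simp [this]
  have htr2 : (adjMat G ^ 2).trace = ∑ i, eig G i ^ 2 := trace_pow (adjMat_isHermitian G) 2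
  have htr4 : (adjMat G ^ 4).trace = ∑ i, eig G i ^ 4 := trace_pow (adjMat_isHermitian G) 4
  -- A² is symmetric
  set B := adjMat G ^ 2 with hB
  have hBsym : ∀ u v, B v u = B u v := by
    intro u v
    have hA := adjMat_isHermitian G
    have hAt : Matrix.transpose (adjMat G) = adjMat G := hA
    have : Matrix.transpose B = B := by
      rw [hB, pow_two, Matrix.transpose_mul, hAt, ← pow_two]
    calc B v u = Matrix.transpose B u v := rfl
      _ = B u v := by rw [this]
  have hBdiag : ∀ v, B v v = (G.degree v : ℝ) := by
    intro v
    rw [hB, pow_two, adjMat_eq, G.adjMatrix_mul_self_apply_self]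
  have htr4' : (adjMat G ^ 4).trace = ∑ v, ∑ w, (B v w) ^ 2 := by
    rw [show (4 : ℕ) = 2 + 2 from rfl, pow_add, ← hB, Matrix.trace]
    refine Finset.sum_congr rfl fun v _ => ?_
    rw [Matrix.diag_apply, Matrix.mul_apply]
    refine Finset.sum_congr rfl fun w _ => ?_
    rw [hBsym v w, pow_two]
  have hineq : ∑ v, (G.degree v : ℝ) ^ 2 ≤ ∑ v, ∑ w, (B v w) ^ 2 := by
    refine Finset.sum_le_sum fun v _ => ?_
    calc (G.degree v : ℝ) ^ 2 = B v v ^ 2 := by rw [hBdiag]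
      _ ≤ ∑ w, (B v w) ^ 2 := Finset.single_le_sum (f := fun w => (B v w) ^ 2)
          (fun w _ => sq_nonneg _) (Finset.mem_univ v)
  have hfinal : ∑ v, (G.degree v : ℝ) ^ 2 ≤ ∑ v, (G.degree v : ℝ) := by
    calc ∑ v, (G.degree v : ℝ) ^ 2 ≤ ∑ v, ∑ w, (B v w) ^ 2 := hineq
      _ = (adjMat G ^ 4).trace := htr4'.symm
      _ = ∑ i, eig G i ^ 4 := htr4
      _ = ∑ i, eig G i ^ 2 := h42
      _ = (adjMat G ^ 2).trace := htr2.symm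
      _ = ∑ v, (G.degree v : ℝ) := trace_sq G
  -- pointwise
  intro v
  by_contra hv
  push_neg at hv
  have h2 : (2 : ℝ) ≤ (G.degree v : ℝ) := by exact_mod_cast hv
  have hterm : ∀ w, (G.degree w : ℝ) ≤ (G.degree w : ℝ) ^ 2 := by
    intro w
    rcases Nat.eq_zero_or_pos (G.degree w) with h0 | h1
    · simp [h0]
    · have : (1 : ℝ) ≤ (G.degree w : ℝ) := by exact_mod_cast h1
      nlinarith
  have hlt : ∑ w, (G.degree w : ℝ) < ∑ w, (G.degree w : ℝ) ^ 2 := by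
    refine Finset.sum_lt_sum (fun w _ => hterm w) ⟨v, Finset.mem_univ v, ?_⟩
    nlinarith
  linarith

theorem energy_of_degree_le_one (hdeg : ∀ v, G.degree v ≤ 1) : energy G = grank G := by
  have hA2 : adjMat G * adjMat G = Matrix.diagonal (fun v => (G.degree v : ℝ)) := by
    ext u v
    by_cases huv : u = v
    · subst huv
      rw [adjMat_eq, G.adjMatrix_mul_self_apply_self, Matrix.diagonal_apply_eq]
    · rw [Matrix.diagonal_apply_ne _ huv, Matrix.mul_apply]
      refine Finset.sum_eq_zero fun w _ => ?_
      rw [adjMat_eq]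
      by_cases h1 : G.Adj u w
      · by_cases h2 : G.Adj w v
        · exfalso
          have hsub : {u, v} ⊆ G.neighborFinset w := by
            intro x hx
            rcases Finset.mem_insert.mp hx with rfl | hx
            · exact (G.mem_neighborFinset w x).mpr h1.symm
            · rw [Finset.mem_singleton] at hx; subst hx
              exact (G.mem_neighborFinset w x).mpr h2
          have := Finset.card_le_card hsub
          rw [Finset.card_insert_of_notMem (by simpa using huv),
            Finset.card_singleton] at this
          have := hdeg w
          rw [SimpleGraph.degree] at this
          omega
        · simp [h2]
      · simp [h1]
  have hA3 : adjMat G * adjMat G * adjMat G = adjMat G := by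
    rw [hA2]
    ext u v
    rw [Matrix.diagonal_mul]
    by_cases h : G.Adj u v
    · have h1 : 1 ≤ G.degree u := by
        rw [← SimpleGraph.card_neighborFinset_eq_degree]
        exact Finset.card_pos.mpr ⟨v, (G.mem_neighborFinset u v).mpr h⟩
      have : G.degree u = 1 := le_antisymm (hdeg u) h1
      rw [this]
      simp
    · rw [adjMat_eq]
      simp [h]
  have heig : ∀ i, eig G i ^ 3 = eig G i := by
    intro i
    have hA := adjMat_isHermitian G
    have hv := hA.mulVec_eigenvectorBasis i
    have h3 : (adjMat G * adjMat G * adjMat G) *ᵥ ⇑(hA.eigenvectorBasis i)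
        = (hA.eigenvalues i ^ 3) • ⇑(hA.eigenvectorBasis i) := by
      rw [← Matrix.mulVec_mulVec, ← Matrix.mulVec_mulVec, hv, Matrix.mulVec_smul, hv,
        Matrix.mulVec_smul, Matrix.mulVec_smul, hv, smul_smul, smul_smul]
      congr 1
      ring
    rw [hA3, hv] at h3
    show hA.eigenvalues i ^ 3 = hA.eigenvalues i
    have hvne : ⇑(hA.eigenvectorBasis i) ≠ 0 := by
      intro hz
      have hn := hA.eigenvectorBasis.orthonormal.1 i
      rw [show (hA.eigenvectorBasis i : EuclideanSpace ℝ V) = 0 from by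
        ext x; exact congrFun hz x] at hn
      simp at hn
    obtain ⟨x, hx⟩ := Function.ne_iff.mp hvne
    simp only [Pi.zero_apply] at hx
    have h4 := congrFun h3 x
    simp only [Pi.smul_apply, smul_eq_mul] at h4
    have hfac : (hA.eigenvalues i ^ 3 - hA.eigenvalues i) *
        (WithLp.equiv 2 (V → ℝ)) (hA.eigenvectorBasis i) x = 0 := by
      rw [sub_mul]; exact sub_eq_zero.mpr h4.symm
    rcases mul_eq_zero.mp hfac with h | h
    · linarith [h]
    · exact absurd h hx
  have habs : ∀ i, |eig G i| = if eig G i = 0 then 0 else 1 := by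
    intro i
    by_cases h : eig G i = 0
    · simp [h]
    · rw [if_neg h]
      have := heig i
      have h2 : eig G i ^ 2 = 1 := by
        have hfac : eig G i * (eig G i ^ 2 - 1) = 0 := by ring_nf; linarith [this]
        rcases mul_eq_zero.mp hfac with h' | h'
        · exact absurd h' h
        · linarith
      have := sq_abs (eig G i)
      nlinarith [abs_nonneg (eig G i)]
  rw [energy_eq_sum_S, grank, grank_card]
  rw [Finset.sum_congr rfl (fun i hi => by
    rw [habs i, if_neg (Finset.mem_filter.mp hi).2])]
  simp

theorem kTwoUnion_adj {a b : ℕ} (x y : Fin a × Fin 2 ⊕ Fin b) :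
    (kTwoUnion a b).Adj x y ↔
      ∃ i : Fin a, ∃ p q : Fin 2, p ≠ q ∧ x = Sum.inl (i, p) ∧ y = Sum.inl (i, q) := by
  rw [kTwoUnion, SimpleGraph.fromRel_adj]
  constructor
  · rintro ⟨hne, (⟨i, p, q, hpq, hx, hy⟩ | ⟨i, p, q, hpq, hy, hx⟩)⟩
    · exact ⟨i, p, q, hpq, hx, hy⟩
    · exact ⟨i, q, p, hpq.symm, hx, hy⟩
  · rintro ⟨i, p, q, hpq, rfl, rfl⟩
    exact ⟨by simp [hpq], Or.inl ⟨i, p, q, hpq, rfl, rfl⟩⟩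

theorem degree_le_one_iff (G : SimpleGraph V) [DecidableRel G.Adj] (v : V) :
    G.degree v ≤ 1 ↔ ∀ w w', G.Adj v w → G.Adj v w' → w = w' := by
  rw [← SimpleGraph.card_neighborFinset_eq_degree, Finset.card_le_one]
  constructor
  · intro h w w' hw hw'
    exact h w ((G.mem_neighborFinset v w).mpr hw) w' ((G.mem_neighborFinset v w').mpr hw')
  · intro h w hw w' hw'
    exact h w w' ((G.mem_neighborFinset v w).mp hw) ((G.mem_neighborFinset v w').mp hw')

/-- Uniqueness of neighbors in `kTwoUnion`. -/
theorem kTwoUnion_unique {a b : ℕ} (x y z : Fin a × Fin 2 ⊕ Fin b)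
    (hy : (kTwoUnion a b).Adj x y) (hz : (kTwoUnion a b).Adj x z) : y = z := by
  rw [kTwoUnion_adj] at hy hz
  obtain ⟨i, p, q, hpq, rfl, rfl⟩ := hy
  obtain ⟨i', p', q', hpq', hx, rfl⟩ := hz
  injection hx with h
  have hi : i = i' := congrArg Prod.fst h
  have hp : p = p' := congrArg Prod.snd h
  subst hi
  subst hp
  clear h
  have : q = q' := by revert hpq hpq'; revert p q q'; decide
  rw [this]

theorem degree_le_one_of_iso {G : SimpleGraph V} [DecidableRel G.Adj] {a b : ℕ}
    (f : G ≃g kTwoUnion a b) : ∀ v, G.degree v ≤ 1 := by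
  intro v
  rw [degree_le_one_iff]
  intro w w' hw hw'
  have h1 : (kTwoUnion a b).Adj (f v) (f w) := f.map_rel_iff.mpr hw
  have h2 : (kTwoUnion a b).Adj (f v) (f w') := f.map_rel_iff.mpr hw'
  exact f.injective (kTwoUnion_unique _ _ _ h1 h2)

theorem iso_of_degree_le_one (G : SimpleGraph V) [DecidableRel G.Adj]
    (hdeg : ∀ v, G.degree v ≤ 1) :
    ∃ a b : ℕ, Nonempty (G ≃g kTwoUnion a b) := by
  classical
  letI : LinearOrder V := LinearOrder.lift' (fun v => ((Fintype.equivFin V) v : ℕ))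
    (fun u v h => (Fintype.equivFin V).injective (Fin.val_injective h))
  -- unique neighbor function
  have huniq : ∀ v w w', G.Adj v w → G.Adj v w' → w = w' :=
    fun v w w' hw hw' => (degree_le_one_iff G v).mp (hdeg v) w w' hw hw'
  set nbr : V → V := fun v => if h : ∃ w, G.Adj v w then h.choose else v with hnbr_def
  have hnbr : ∀ v w, G.Adj v w → nbr v = w := by
    intro v w hw
    have h : ∃ w, G.Adj v w := ⟨w, hw⟩
    rw [hnbr_def]
    simp only [dif_pos h]
    exact huniq v h.choose w h.choose_spec hw
  have hadj_nbr : ∀ v, (∃ w, G.Adj v w) → G.Adj v (nbr v) := by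
    intro v h
    rw [hnbr_def]
    simp only [dif_pos h]
    exact h.choose_spec
  set M : Finset V := univ.filter (fun v => ∃ w, G.Adj v w ∧ v < w) with hM
  set I : Finset V := univ.filter (fun v => ∀ w, ¬ G.Adj v w) with hI
  have hMprop : ∀ v ∈ M, G.Adj v (nbr v) ∧ v < nbr v := by
    intro v hv
    obtain ⟨w, hw, hlt⟩ := (Finset.mem_filter.mp hv).2
    rw [hnbr v w hw]
    exact ⟨(hnbr v w hw) ▸ hw, hlt⟩
  have hnbr_invol : ∀ v w, G.Adj v w → nbr w = v := fun v w hw => hnbr w v hw.symm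
  refine ⟨M.card, I.card, ⟨?_⟩⟩
  have eM : M ≃ Fin M.card := Fintype.equivFinOfCardEq (Fintype.card_coe M)
  have eI : I ≃ Fin I.card := Fintype.equivFinOfCardEq (Fintype.card_coe I)
  set F : Fin M.card × Fin 2 ⊕ Fin I.card → V := fun x =>
    match x with
    | Sum.inl (i, p) => if p = 0 then (eM.symm i : V) else nbr (eM.symm i : V)
    | Sum.inr j => (eI.symm j : V) with hF
  -- basic facts
  have hFM : ∀ i : Fin M.card, (eM.symm i : V) ∈ M := fun i => (eM.symm i).2
  have hFI : ∀ j : Fin I.card, (eI.symm j : V) ∈ I := fun j => (eI.symm j).2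
  have hInoadj : ∀ v ∈ I, ∀ w, ¬ G.Adj v w := fun v hv => (Finset.mem_filter.mp hv).2
  have fin2 : ∀ p : Fin 2, p ≠ 0 → p = 1 := by decide
  have hMinj : ∀ (i i' : Fin M.card), (eM.symm i : V) = (eM.symm i' : V) → i = i' :=
    fun i i' h => eM.symm.injective (Subtype.ext h)
  have class0 : ∀ (i : Fin M.card), (eM.symm i : V) < nbr (eM.symm i : V) :=
    fun i => (hMprop _ (hFM i)).2
  have hnn : ∀ (i : Fin M.card), nbr (nbr (eM.symm i : V)) = (eM.symm i : V) :=
    fun i => hnbr_invol _ _ (hMprop _ (hFM i)).1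
  have hclash : ∀ (i i' : Fin M.card), (eM.symm i : V) ≠ nbr (eM.symm i' : V) := by
    intro i i' hc
    have h1 := class0 i
    have h2 := class0 i'
    have hthis : nbr (eM.symm i : V) = (eM.symm i' : V) := by
      rw [hc]; exact hnn i'
    rw [hthis] at h1
    rw [← hc] at h2
    exact absurd (h1.trans h2) (lt_irrefl _)
  have hinj : Function.Injective F := by
    rintro (⟨i, p⟩ | j) (⟨i', p'⟩ | j') h <;> simp only [hF] at h
    · -- inl inl
      by_cases hp : p = 0 <;> by_cases hp' : p' = 0
      · rw [if_pos hp, if_pos hp'] at h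
        rw [hp, hp', hMinj _ _ h]
      · rw [if_pos hp, if_neg hp'] at h
        exact absurd h (hclash i i')
      · rw [if_neg hp, if_pos hp'] at h
        exact absurd h.symm (hclash i' i)
      · rw [if_neg hp, if_neg hp'] at h
        have : (eM.symm i : V) = (eM.symm i' : V) := by
          rw [← hnn i, h, hnn i']
        rw [fin2 p hp, fin2 p' hp', hMinj _ _ this]
    · -- inl inr
      exfalso
      by_cases hp : p = 0
      · rw [if_pos hp] at h
        have := (hMprop _ (hFM i)).1
        rw [h] at this
        exact hInoadj _ (hFI j') _ this
      · rw [if_neg hp] at h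
        have : G.Adj (nbr (eM.symm i : V)) (eM.symm i : V) := (hMprop _ (hFM i)).1.symm
        rw [h] at this
        exact hInoadj _ (hFI j') _ this
    · -- inr inl
      exfalso
      by_cases hp : p' = 0
      · rw [if_pos hp] at h
        have := (hMprop _ (hFM i')).1
        rw [← h] at this
        exact hInoadj _ (hFI j) _ this
      · rw [if_neg hp] at h
        have : G.Adj (nbr (eM.symm i' : V)) (eM.symm i' : V) := (hMprop _ (hFM i')).1.symm
        rw [← h] at this
        exact hInoadj _ (hFI j) _ this
    · -- inr inr
      rw [eI.symm.injective (Subtype.ext h)]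
  have hsurj : Function.Surjective F := by
    intro v
    by_cases hv : ∃ w, G.Adj v w
    · obtain ⟨w, hw⟩ := hv
      rcases lt_trichotomy v w with hlt | heq | hgt
      · have hvM : v ∈ M := Finset.mem_filter.mpr ⟨Finset.mem_univ _, ⟨w, hw, hlt⟩⟩
        refine ⟨Sum.inl (eM ⟨v, hvM⟩, 0), ?_⟩
        simp only [hF, if_true, Equiv.symm_apply_apply]
      · exact absurd heq (G.ne_of_adj hw)
      · have hwM : w ∈ M := Finset.mem_filter.mpr ⟨Finset.mem_univ _, ⟨v, hw.symm, hgt⟩⟩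
        refine ⟨Sum.inl (eM ⟨w, hwM⟩, 1), ?_⟩
        simp only [hF, show ((1 : Fin 2) = 0) = False from by simp, if_false,
          Equiv.symm_apply_apply]
        exact hnbr w v hw.symm
    · push_neg at hv
      have hvI : v ∈ I := Finset.mem_filter.mpr ⟨Finset.mem_univ _, hv⟩
      refine ⟨Sum.inr (eI ⟨v, hvI⟩), ?_⟩
      simp only [hF, Equiv.symm_apply_apply]
  -- the iso from kTwoUnion to G
  have hrel : ∀ x y, G.Adj (F x) (F y) ↔ (kTwoUnion M.card I.card).Adj x y := by
    intro x y
    constructor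
    · intro hadj
      rcases x with ⟨i, p⟩ | j
      · rcases y with ⟨i', p'⟩ | j'
        · -- inl inl
          rw [kTwoUnion_adj]
          simp only [hF] at hadj
          by_cases hp : p = 0 <;> by_cases hp' : p' = 0
          · rw [if_pos hp, if_pos hp'] at hadj
            exfalso
            have h1 := hnbr _ _ hadj
            have h2 := hnbr _ _ hadj.symm
            have l1 := class0 i
            have l2 := class0 i'
            rw [h1] at l1
            rw [h2] at l2
            exact absurd (l1.trans l2) (lt_irrefl _)
          · rw [if_pos hp, if_neg hp'] at hadj
            have h1 := hnbr _ _ hadj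
            have h2 : (eM.symm i : V) = (eM.symm i' : V) := by
              rw [← hnn i, h1, hnn i']
            have hii := hMinj _ _ h2
            subst hii
            exact ⟨i, p, p', by rw [hp, fin2 p' hp']; decide, rfl, rfl⟩
          · rw [if_neg hp, if_pos hp'] at hadj
            have h1 := hnbr _ _ hadj.symm
            have h2 : (eM.symm i' : V) = (eM.symm i : V) := by
              rw [← hnn i', h1, hnn i]
            have hii := hMinj _ _ h2
            subst hii
            exact ⟨i', p, p', by rw [hp', fin2 p hp]; decide, rfl, rfl⟩
          · rw [if_neg hp, if_neg hp'] at hadj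
            exfalso
            have h1 := hnbr _ _ hadj
            rw [hnn i] at h1
            have h2 := hnbr _ _ hadj.symm
            rw [hnn i'] at h2
            have l1 := class0 i
            have l2 := class0 i'
            rw [← h2] at l1
            rw [← h1] at l2
            exact absurd (l1.trans l2) (lt_irrefl _)
        · exfalso
          simp only [hF] at hadj
          exact hInoadj _ (hFI j') _ hadj.symm
      · exfalso
        simp only [hF] at hadj
        exact hInoadj _ (hFI j) _ hadj
    · intro hadj
      rw [kTwoUnion_adj] at hadj
      obtain ⟨i, p, q, hpq, rfl, rfl⟩ := hadj
      have hbase := (hMprop _ (hFM i)).1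
      simp only [hF]
      by_cases hp : p = 0
      · have hq : q = 1 := fin2 q (fun h => hpq (by rw [hp, h]))
        rw [if_pos hp, if_neg (by rw [hq]; decide)]
        exact hbase
      · have hp1 : p = 1 := fin2 p hp
        have hq : q = 0 := by
          by_contra hq0
          rw [hp1, fin2 q hq0] at hpq
          exact hpq rfl
        rw [if_neg hp, if_pos hq]
        exact hbase.symm
  have iso : kTwoUnion M.card I.card ≃g G :=
    { toEquiv := Equiv.ofBijective F ⟨hinj, hsurj⟩,
      map_rel_iff' := fun {x y} => hrel x y }
  exact iso.symm


end GraphAux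

/-- `E(G) = rank(G)` holds iff `G` is a disjoint union of copies of `K₂` and isolated
vertices, equivalently iff every vertex of `G` has degree at most `1`. -/
theorem energy_eq_rank_iff (G : SimpleGraph V) [DecidableRel G.Adj] :
    (energy G = grank G ↔ ∃ a b : ℕ, Nonempty (G ≃g kTwoUnion a b)) ∧
    (energy G = grank G ↔ ∀ v : V, G.degree v ≤ 1) := by
  constructor
  · constructor
    · intro h
      exact iso_of_degree_le_one G (degree_le_one_of_energy G h)
    · rintro ⟨a, b, ⟨f⟩⟩
      exact energy_of_degree_le_one G (degree_le_one_of_iso f)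
  · exact ⟨degree_le_one_of_energy G, energy_of_degree_le_one G⟩

end GraphEnergy
end

section
/- If every eigenvalue of the adjacency matrix of a finite simple graph G is at least −1, then G is a disjoint union of complete graphs; equivalently, every connected component of G is a complete graph. -/
set_option linter.unusedSectionVars false

open Finset SimpleGraph

namespace GraphEnergy

variable {V : Type*} [Fintype V] [DecidableEq V]

lemma adjMat_apply_eq_one {G : SimpleGraph V} {i j : V} (hij : G.Adj i j) :
    adjMat G i j = 1 := by
  letI := Classical.decRel G.Adj
  simp [adjMat, hij]

lemma adjMat_apply_eq_zero {G : SimpleGraph V} {i j : V} (hij : ¬ G.Adj i j) :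
    adjMat G i j = 0 := by
  letI := Classical.decRel G.Adj
  simp [adjMat, hij]

lemma addOne_posSemidef {A : Matrix V V ℝ} (hA : A.IsHermitian)
    (h : ∀ i, -1 ≤ hA.eigenvalues i) : (A + 1).PosSemidef := by
  have hU : (hA.eigenvectorUnitary : Matrix V V ℝ) *
      (star (hA.eigenvectorUnitary : Matrix V V ℝ)) = 1 :=
    (Matrix.mem_unitaryGroup_iff).mp (hA.eigenvectorUnitary).2
  have hrep : A + 1 = (hA.eigenvectorUnitary : Matrix V V ℝ) *
      Matrix.diagonal (fun i => hA.eigenvalues i + 1) *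
      (star (hA.eigenvectorUnitary : Matrix V V ℝ)) := by
    conv_lhs => rw [hA.spectral_theorem, ← hU]
    rw [Unitary.conjStarAlgAut_apply]
    have hdiag : (Matrix.diagonal (RCLike.ofReal ∘ hA.eigenvalues) : Matrix V V ℝ) + 1
        = Matrix.diagonal (fun i => hA.eigenvalues i + 1) := by
      rw [← Matrix.diagonal_one, Matrix.diagonal_add]
      simp
    rw [← hdiag]
    noncomm_ring
  have hd : (Matrix.diagonal (fun i => hA.eigenvalues i + 1) : Matrix V V ℝ).PosSemidef :=
    Matrix.posSemidef_diagonal_iff.mpr fun i => by linarith [h i]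
  rw [hrep, Matrix.star_eq_conjTranspose]
  exact hd.mul_mul_conjTranspose_same _

lemma adj_of_adj_adj (G : SimpleGraph V) (h : ∀ i : V, -1 ≤ eig G i)
    {a b c : V} (hab : G.Adj a b) (hbc : G.Adj b c) (hac : a ≠ c) : G.Adj a c := by
  by_contra hnac
  have hpsd := addOne_posSemidef (adjMat_isHermitian G) h
  set s : ℝ := Real.sqrt 2 with hs
  set x : V → ℝ := Pi.single a 1 + Pi.single c 1 + (-s) • (Pi.single b 1 : V → ℝ) with hx
  have h0 := hpsd.dotProduct_mulVec_nonneg x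
  have e1 : adjMat G a b = 1 := adjMat_apply_eq_one hab
  have e2 : adjMat G b a = 1 := adjMat_apply_eq_one hab.symm
  have e3 : adjMat G b c = 1 := adjMat_apply_eq_one hbc
  have e4 : adjMat G c b = 1 := adjMat_apply_eq_one hbc.symm
  have e5 : adjMat G a c = 0 := adjMat_apply_eq_zero hnac
  have e6 : adjMat G c a = 0 := adjMat_apply_eq_zero (fun hh => hnac hh.symm)
  have e7 : adjMat G a a = 0 := adjMat_apply_eq_zero (G.irrefl (v := a))
  have e8 : adjMat G b b = 0 := adjMat_apply_eq_zero (G.irrefl (v := b))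
  have e9 : adjMat G c c = 0 := adjMat_apply_eq_zero (G.irrefl (v := c))
  have hab' : a ≠ b := hab.ne
  have hbc' : b ≠ c := hbc.ne
  simp only [hx, star_trivial, Matrix.add_mulVec, Matrix.one_mulVec, Matrix.mulVec_add,
    Matrix.mulVec_smul, Matrix.mulVec_single, dotProduct_add, add_dotProduct,
    smul_dotProduct, dotProduct_smul, single_dotProduct,
    Matrix.add_apply, Matrix.one_apply, Matrix.col_apply, op_smul_eq_mul,
    Pi.add_apply, Pi.smul_apply, Pi.single_apply, smul_eq_mul] at h0
  simp only [if_pos rfl, if_neg hab', if_neg hab'.symm, if_neg hbc', if_neg hbc'.symm,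
    if_neg hac, if_neg (Ne.symm hac), e1, e2, e3, e4, e5, e6, e7, e8, e9] at h0
  have hsq : s ^ 2 = 2 := Real.sq_sqrt (by norm_num)
  have hs1 : (1:ℝ) < s := by
    rw [hs, show (1:ℝ) = Real.sqrt 1 by simp]
    exact Real.sqrt_lt_sqrt (by norm_num) (by norm_num)
  norm_num at h0
  nlinarith [h0, hsq, hs1]

lemma adj_of_walk {G : SimpleGraph V}
    (key : ∀ a b c : V, G.Adj a b → G.Adj b c → a ≠ c → G.Adj a c) :
    ∀ {u v : V}, G.Walk u v → u ≠ v → G.Adj u v := by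
  intro u v p
  induction p with
  | nil => intro hne; exact absurd rfl hne
  | @cons u' w' v' hadj p ih =>
    intro hne
    by_cases hwv : w' = v'
    · subst hwv; exact hadj
    · exact key _ _ _ hadj (ih hwv) hne

/-- If every adjacency eigenvalue of `G` is at least `-1`, then every connected component of
`G` is a complete graph: any two distinct vertices in the same component are adjacent. -/
theorem union_of_complete_of_eigenvalues_ge_neg_one (G : SimpleGraph V)
    (h : ∀ i : V, -1 ≤ eig G i) :
    ∀ u v : V, G.Reachable u v → u ≠ v → G.Adj u v := by
  intro u v hr hne
  obtain ⟨p⟩ := hr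
  exact adj_of_walk (fun a b c hab hbc hac => adj_of_adj_adj G h hab hbc hac) p hne
end GraphEnergy
end

section
/- Let G be a connected finite simple graph that is not isomorphic to K₁ and not isomorphic to the star K_{1,i} for any i with 1 ≤ i ≤ 3. Then E(G) ≥ 4. -/
set_option linter.unusedSectionVars false

open Finset SimpleGraph

namespace GraphEnergy

variable {V : Type*} [Fintype V] [DecidableEq V]

/-! ### Auxiliary spectral lemmas -/

open Matrix in
lemma trace_eq_sum_eig' {n : Type*} [Fintype n] [DecidableEq n] {A : Matrix n n ℝ}
    (hA : A.IsHermitian) : A.trace = ∑ i, hA.eigenvalues i := by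
  have h1 : (star (hA.eigenvectorUnitary : Matrix n n ℝ)) *
      (hA.eigenvectorUnitary : Matrix n n ℝ) = 1 :=
    (Matrix.mem_unitaryGroup_iff').mp hA.eigenvectorUnitary.2
  conv_lhs => rw [hA.spectral_theorem, Unitary.conjStarAlgAut_apply]
  rw [Matrix.trace_mul_cycle, h1, one_mul, Matrix.trace_diagonal]
  simp

open Matrix in
lemma trace_sq_eq_sum_eig' {n : Type*} [Fintype n] [DecidableEq n] {A : Matrix n n ℝ}
    (hA : A.IsHermitian) : (A * A).trace = ∑ i, hA.eigenvalues i ^ 2 := by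
  have h1 : (star (hA.eigenvectorUnitary : Matrix n n ℝ)) *
      (hA.eigenvectorUnitary : Matrix n n ℝ) = 1 :=
    (Matrix.mem_unitaryGroup_iff').mp hA.eigenvectorUnitary.2
  set U : Matrix n n ℝ := (hA.eigenvectorUnitary : Matrix n n ℝ) with hU
  set D : Matrix n n ℝ := Matrix.diagonal (RCLike.ofReal ∘ hA.eigenvalues) with hD
  have key : A * A = U * (D * D) * star U := by
    conv_lhs => rw [hA.spectral_theorem, Unitary.conjStarAlgAut_apply]
    calc (U * D * star U) * (U * D * star U)
        = (U * D) * ((star U * U) * (D * star U)) := by simp only [mul_assoc]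
      _ = U * (D * D) * star U := by rw [h1, one_mul]; simp only [mul_assoc]
  rw [key, Matrix.trace_mul_cycle, h1, one_mul]
  rw [hD, Matrix.diagonal_mul_diagonal, Matrix.trace_diagonal]
  simp [sq]

open Matrix in
lemma eig_quad' {n : Type*} [Fintype n] [DecidableEq n] {A : Matrix n n ℝ}
    (hA : A.IsHermitian) (p q : ℝ) (h : A * A = p • A + q • 1) (i : n) :
    hA.eigenvalues i ^ 2 = p * hA.eigenvalues i + q := by
  have hv := hA.mulVec_eigenvectorBasis i
  have hne : ⇑(hA.eigenvectorBasis i) ≠ 0 := by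
    have h0 := hA.eigenvectorBasis.orthonormal.ne_zero i
    intro hc
    apply h0
    ext j
    exact congrFun hc j
  have h2 : (A * A) *ᵥ ⇑(hA.eigenvectorBasis i)
      = (hA.eigenvalues i ^ 2) • ⇑(hA.eigenvectorBasis i) := by
    rw [← Matrix.mulVec_mulVec, hv, Matrix.mulVec_smul, hv, smul_smul, sq]
  rw [h, Matrix.add_mulVec, Matrix.smul_mulVec, Matrix.smul_mulVec, hv,
    Matrix.one_mulVec, smul_smul] at h2
  have hinj := smul_left_injective ℝ hne
  apply hinj
  simpa [add_smul] using h2.symm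

/-! ### Basic facts about `adjMat`, `eig` and `energy` -/

lemma adjMat_of_adj {G : SimpleGraph V} {i j : V} (h : G.Adj i j) : adjMat G i j = 1 := by
  letI := Classical.decRel G.Adj
  simp [adjMat, h]

lemma adjMat_of_not_adj {G : SimpleGraph V} {i j : V} (h : ¬ G.Adj i j) : adjMat G i j = 0 := by
  letI := Classical.decRel G.Adj
  simp [adjMat, h]

lemma adjMat_eq_s3 (G : SimpleGraph V) [h : DecidableRel G.Adj] : adjMat G = G.adjMatrix ℝ := by
  ext i j
  by_cases hij : G.Adj i j
  · simp [adjMat_of_adj hij, hij]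
  · simp [adjMat_of_not_adj hij, hij]

lemma sum_eig (G : SimpleGraph V) : ∑ i, eig G i = 0 := by
  classical
  rw [show (∑ i, eig G i) = (adjMat G).trace from (trace_eq_sum_eig' _).symm, adjMat_eq_s3]
  exact SimpleGraph.trace_adjMatrix _ _

lemma sum_eig_sq (G : SimpleGraph V) [DecidableRel G.Adj] :
    ∑ i, eig G i ^ 2 = 2 * #G.edgeFinset := by
  rw [show (∑ i, eig G i ^ 2) = (adjMat G * adjMat G).trace from (trace_sq_eq_sum_eig' _).symm,
    adjMat_eq_s3]
  rw [Matrix.trace]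
  have : ∀ i : V, (G.adjMatrix ℝ * G.adjMatrix ℝ).diag i = (G.degree i : ℝ) := fun i =>
    G.adjMatrix_mul_self_apply_self (α := ℝ) i
  rw [Finset.sum_congr rfl fun i _ => this i]
  rw [← Nat.cast_sum]
  rw [SimpleGraph.sum_degrees_eq_twice_card_edges]
  push_cast
  ring

lemma energy_nonneg (G : SimpleGraph V) : 0 ≤ energy G :=
  Finset.sum_nonneg fun i _ => abs_nonneg _

lemma two_abs_eig_le (G : SimpleGraph V) (i : V) : 2 * |eig G i| ≤ energy G := by
  have h1 : energy G = |eig G i| + ∑ j ∈ univ.erase i, |eig G j| :=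
    (Finset.add_sum_erase _ _ (mem_univ i)).symm
  have h2 : |∑ j ∈ univ.erase i, eig G j| ≤ ∑ j ∈ univ.erase i, |eig G j| :=
    Finset.abs_sum_le_sum_abs _ _
  have h3 : ∑ j ∈ univ.erase i, eig G j = - eig G i := by
    rw [Finset.sum_erase_eq_sub (mem_univ i), sum_eig]; ring
  rw [h3, abs_neg] at h2
  linarith

lemma energy_ge_of_edges (G : SimpleGraph V) [DecidableRel G.Adj]
    (h4 : 4 ≤ #G.edgeFinset) : 4 ≤ energy G := by
  have h2m : ∑ i, eig G i ^ 2 = 2 * #G.edgeFinset := sum_eig_sq G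
  have hle : ∑ i, eig G i ^ 2 ≤ energy G * (energy G / 2) := by
    calc ∑ i, eig G i ^ 2 ≤ ∑ i, |eig G i| * (energy G / 2) := by
          apply Finset.sum_le_sum
          intro i _
          have := two_abs_eig_le G i
          have habs : eig G i ^ 2 = |eig G i| * |eig G i| := by
            rw [← abs_mul, ← sq, abs_sq]
          rw [habs]
          exact mul_le_mul_of_nonneg_left (by linarith) (abs_nonneg _)
      _ = energy G * (energy G / 2) := by rw [← Finset.sum_mul]; rfl
  have hm : (8 : ℝ) ≤ 2 * #G.edgeFinset := by
    have : (4 : ℝ) ≤ #G.edgeFinset := by exact_mod_cast h4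
    linarith
  have hE := energy_nonneg G
  nlinarith [hle, h2m, hm]

/-! ### Combinatorial lemmas -/

lemma exists_adj {G : SimpleGraph V} (hconn : G.Connected) {x y : V} (hxy : x ≠ y) :
    ∃ z, G.Adj x z := by
  obtain ⟨p⟩ := hconn x y
  cases p with
  | nil => exact absurd rfl hxy
  | cons h _ => exact ⟨_, h⟩

lemma walk_closed {G : SimpleGraph V} (S : Set V)
    (hS : ∀ a ∈ S, ∀ b, G.Adj a b → b ∈ S) {x y : V} (p : G.Walk x y) (hx : x ∈ S) :
    y ∈ S := by
  induction p with
  | nil => exact hx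
  | cons h q ih => exact ih (hS _ hx _ h)

lemma card_le_edges {G : SimpleGraph V} [DecidableRel G.Adj] (hconn : G.Connected) :
    Fintype.card V ≤ #G.edgeFinset + 1 := by
  obtain ⟨r⟩ := hconn.nonempty
  have key : ∀ v : V, v ≠ r → ∃ w, G.Adj v w ∧ G.dist w r < G.dist v r := by
    intro v hv
    have hreach : G.Reachable v r := hconn v r
    obtain ⟨p, hp⟩ := hreach.exists_walk_length_eq_dist
    cases p with
    | nil => exact absurd rfl hv
    | @cons _ w _ h q =>
      refine ⟨w, h, ?_⟩
      have hq : G.dist w r ≤ q.length := SimpleGraph.dist_le q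
      have : q.length + 1 = G.dist v r := by simpa using hp
      omega
  classical
  choose w hadj hdist using key
  set f : V → Sym2 V := fun v => if h : v ≠ r then s(v, w v h) else s(v, v) with hf
  have hmaps : ∀ v ∈ univ.erase r, f v ∈ G.edgeFinset := by
    intro v hv
    have hvr : v ≠ r := (Finset.mem_erase.mp hv).1
    simp only [hf, dif_pos hvr, SimpleGraph.mem_edgeFinset, SimpleGraph.mem_edgeSet]
    exact hadj v hvr
  have hinj : Set.InjOn f (univ.erase r : Finset V) := by
    intro a ha b hb hab
    have har : a ≠ r := (Finset.mem_erase.mp ha).1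
    have hbr : b ≠ r := (Finset.mem_erase.mp hb).1
    simp only [hf, dif_pos har, dif_pos hbr, Sym2.eq_iff] at hab
    rcases hab with ⟨h1, _⟩ | ⟨h1, h2⟩
    · exact h1
    · exfalso
      have d1 := hdist a har
      have d2 := hdist b hbr
      rw [h2] at d1
      rw [← h1] at d2
      omega
  have hcard := Finset.card_le_card_of_injOn f hmaps hinj
  have : #(univ.erase r) = Fintype.card V - 1 := by
    rw [Finset.card_erase_of_mem (mem_univ r), Finset.card_univ]
  have hpos : 1 ≤ Fintype.card V := Fintype.card_pos_iff.mpr ⟨r⟩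
  omega

lemma star_iso {G : SimpleGraph V} (w : V) (i : ℕ) (hcard : Fintype.card V = i + 1)
    (harm : ∀ v, v ≠ w → G.Adj w v)
    (hedge : ∀ a b, G.Adj a b → a = w ∨ b = w) :
    Nonempty (G ≃g completeBipartiteGraph (Fin 1) (Fin i)) := by
  have h1 : Fintype.card {x : V // x = w} = 1 := Fintype.card_subtype_eq w
  have h2 : Fintype.card {x : V // ¬ x = w} = i := by
    rw [Fintype.card_subtype_compl, h1, hcard]
    omega
  let e1 : {x : V // x = w} ≃ Fin 1 := Fintype.equivFinOfCardEq h1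
  let e2 : {x : V // ¬ x = w} ≃ Fin i := Fintype.equivFinOfCardEq h2
  let e : V ≃ (Fin 1 ⊕ Fin i) := (Equiv.sumCompl (· = w)).symm.trans (e1.sumCongr e2)
  have he : ∀ a : V, (a = w → ∃ x, e a = Sum.inl x) ∧ (a ≠ w → ∃ x, e a = Sum.inr x) := by
    intro a
    constructor
    · intro ha
      refine ⟨e1 ⟨a, ha⟩, ?_⟩
      have hh : (Equiv.sumCompl fun x => x = w).symm a = Sum.inl ⟨a, ha⟩ :=
        Equiv.sumCompl_symm_apply_of_pos (p := fun x => x = w) (a := a) ha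
      simp [e, Equiv.trans_apply, hh]
    · intro ha
      refine ⟨e2 ⟨a, ha⟩, ?_⟩
      have hh : (Equiv.sumCompl fun x => x = w).symm a = Sum.inr ⟨a, ha⟩ :=
        Equiv.sumCompl_symm_apply_of_neg (p := fun x => x = w) (a := a) ha
      simp [e, Equiv.trans_apply, hh]
  refine ⟨⟨e, ?_⟩⟩
  intro a b
  show (completeBipartiteGraph (Fin 1) (Fin i)).Adj (e a) (e b) ↔ G.Adj a b
  by_cases ha : a = w <;> by_cases hb : b = w
  · obtain ⟨x, hx⟩ := (he a).1 ha
    obtain ⟨y, hy⟩ := (he b).1 hb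
    subst ha; subst hb
    simp [hx, hy, completeBipartiteGraph]
  · obtain ⟨x, hx⟩ := (he a).1 ha
    obtain ⟨y, hy⟩ := (he b).2 hb
    subst ha
    simpa [hx, hy, completeBipartiteGraph] using harm b hb
  · obtain ⟨x, hx⟩ := (he a).2 ha
    obtain ⟨y, hy⟩ := (he b).1 hb
    subst hb
    simpa [hx, hy, completeBipartiteGraph] using (harm a ha).symm
  · obtain ⟨x, hx⟩ := (he a).2 ha
    obtain ⟨y, hy⟩ := (he b).2 hb
    simp only [hx, hy, completeBipartiteGraph]
    constructor
    · rintro (⟨h, _⟩ | ⟨_, h⟩) <;> simp at h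
    · intro hadj
      rcases hedge a b hadj with h | h
      · exact absurd h ha
      · exact absurd h hb

lemma equiv_fin3 (u v w : V) (h12 : u ≠ v) (h13 : u ≠ w) (h23 : v ≠ w)
    (hcard : Fintype.card V = 3) : ∃ e : Fin 3 ≃ V, e 0 = u ∧ e 1 = v ∧ e 2 = w := by
  have hinj : Function.Injective ![u, v, w] := by
    intro i j hij
    fin_cases i <;> fin_cases j <;> simp_all
  have hbij : Function.Bijective ![u, v, w] :=
    (Fintype.bijective_iff_injective_and_card _).mpr ⟨hinj, by simp [hcard]⟩
  exact ⟨Equiv.ofBijective _ hbij, rfl, rfl, rfl⟩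

lemma equiv_fin4 (u v w x : V) (h12 : u ≠ v) (h13 : u ≠ w) (h14 : u ≠ x) (h23 : v ≠ w)
    (h24 : v ≠ x) (h34 : w ≠ x) (hcard : Fintype.card V = 4) :
    ∃ e : Fin 4 ≃ V, e 0 = u ∧ e 1 = v ∧ e 2 = w ∧ e 3 = x := by
  have hinj : Function.Injective ![u, v, w, x] := by
    intro i j hij
    fin_cases i <;> fin_cases j <;> simp_all
  have hbij : Function.Bijective ![u, v, w, x] :=
    (Fintype.bijective_iff_injective_and_card _).mpr ⟨hinj, by simp [hcard]⟩
  exact ⟨Equiv.ofBijective _ hbij, rfl, rfl, rfl, rfl⟩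

/-! ### The two special small graphs: the triangle and the path on four vertices -/

lemma energy_complete3 (G : SimpleGraph V) (hcard : Fintype.card V = 3)
    (hadj : ∀ i j : V, i ≠ j → G.Adj i j) : 4 ≤ energy G := by
  have e : Fin 3 ≃ V := (Fintype.equivFinOfCardEq hcard).symm
  set A := adjMat G with hA
  set M : Matrix (Fin 3) (Fin 3) ℝ := A.submatrix e e with hM
  have hdiag : ∀ i : Fin 3, A (e i) (e i) = 0 := fun i => adjMat_of_not_adj (G.irrefl)
  have hoff : ∀ i j : Fin 3, i ≠ j → A (e i) (e j) = 1 := fun i j h =>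
    adjMat_of_adj (hadj _ _ (fun hc => h (e.injective hc)))
  have hMval : M = !![0,1,1;1,0,1;1,1,0] := by
    ext i j
    rw [hM, Matrix.submatrix_apply]
    fin_cases i <;> fin_cases j <;>
      simp only [Matrix.cons_val', Matrix.cons_val_zero, Matrix.cons_val_one, Matrix.head_cons,
        Matrix.empty_val', Matrix.cons_val_fin_one, Matrix.head_fin_const, Matrix.cons_val_two,
        Matrix.tail_cons, Matrix.of_apply, Fin.isValue] <;>
      first
        | exact hdiag _
        | exact hoff _ _ (by decide)
  have hMM : M * M = M + (2 : ℝ) • (1 : Matrix (Fin 3) (Fin 3) ℝ) := by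
    rw [hMval]
    ext i j
    fin_cases i <;> fin_cases j <;>
      norm_num [Matrix.mul_apply, Fin.sum_univ_three, Matrix.one_apply, Matrix.add_apply,
        Matrix.smul_apply, Matrix.vecHead, Matrix.vecTail] <;> simp [Matrix.cons_val] <;> norm_num
  have hback : A = M.submatrix e.symm e.symm := by
    rw [hM, Matrix.submatrix_submatrix]
    simp
  have hAA : A * A = A + (2 : ℝ) • 1 := by
    rw [hback, Matrix.submatrix_mul_equiv, hMM]
    simp [Matrix.submatrix_add, Matrix.submatrix_smul, Matrix.submatrix_one_equiv]
  have hquad : ∀ i : V, eig G i ^ 2 = 1 * eig G i + 2 := by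
    intro i
    exact eig_quad' (adjMat_isHermitian G) 1 2 (by rw [← hA, hAA]; norm_num) i
  have habs : ∀ i : V, |eig G i| = (eig G i + 4) / 3 := by
    intro i
    have h := hquad i
    have : (eig G i - 2) * (eig G i + 1) = 0 := by nlinarith [h]
    rcases mul_eq_zero.mp this with h' | h'
    · have : eig G i = 2 := by linarith
      rw [this]; norm_num
    · have : eig G i = -1 := by linarith
      rw [this]; norm_num
  have : energy G = 4 := by
    unfold energy
    rw [Finset.sum_congr rfl fun i _ => habs i, ← Finset.sum_div, Finset.sum_add_distrib,
      sum_eig, Finset.sum_const, Finset.card_univ, hcard]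
    norm_num
  linarith

lemma energy_ge_of_det4 (G : SimpleGraph V) (hcard : Fintype.card V = 4)
    (hdet : (adjMat G).det = 1) : 4 ≤ energy G := by
  have hprod : ∏ i, |eig G i| = 1 := by
    have h := (adjMat_isHermitian G).det_eq_prod_eigenvalues
    rw [hdet] at h
    have h2 : (1 : ℝ) = ∏ i, eig G i := by
      simpa [RCLike.ofReal_real_eq_id, eig] using h
    rw [← Finset.abs_prod, ← h2]
    norm_num
  have hgm := Real.geom_mean_le_arith_mean_weighted univ (fun _ : V => (4 : ℝ)⁻¹)
    (fun i => |eig G i|) (fun _ _ => by norm_num)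
    (by rw [Finset.sum_const, Finset.card_univ, hcard]; norm_num)
    (fun i _ => abs_nonneg _)
  rw [Real.finset_prod_rpow univ _ (fun i _ => abs_nonneg _) _] at hgm
  rw [hprod, Real.one_rpow] at hgm
  have : ∑ i : V, (4 : ℝ)⁻¹ * |eig G i| = energy G / 4 := by
    rw [← Finset.mul_sum]
    unfold energy
    ring
  rw [this] at hgm
  linarith

lemma path_energy (G : SimpleGraph V) (hcard : Fintype.card V = 4) (a b c d : V)
    (hab : G.Adj a b) (hbc : G.Adj b c) (hcd : G.Adj c d)
    (nac : ¬ G.Adj a c) (nad : ¬ G.Adj a d) (nbd : ¬ G.Adj b d)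
    (dac : a ≠ c) (dad : a ≠ d) (dbd : b ≠ d) : 4 ≤ energy G := by
  obtain ⟨e, he0, he1, he2, he3⟩ :=
    equiv_fin4 a b c d (G.ne_of_adj hab) dac dad (G.ne_of_adj hbc) dbd (G.ne_of_adj hcd) hcard
  set A := adjMat G with hA
  set M : Matrix (Fin 4) (Fin 4) ℝ := A.submatrix e e with hM
  have hMval : M = !![0,1,0,0;1,0,1,0;0,1,0,1;0,0,1,0] := by
    have e01 : A (e 0) (e 1) = 1 := by rw [he0, he1]; exact adjMat_of_adj hab
    have e10 : A (e 1) (e 0) = 1 := by rw [he0, he1]; exact adjMat_of_adj hab.symm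
    have e12 : A (e 1) (e 2) = 1 := by rw [he1, he2]; exact adjMat_of_adj hbc
    have e21 : A (e 2) (e 1) = 1 := by rw [he1, he2]; exact adjMat_of_adj hbc.symm
    have e23 : A (e 2) (e 3) = 1 := by rw [he2, he3]; exact adjMat_of_adj hcd
    have e32 : A (e 3) (e 2) = 1 := by rw [he2, he3]; exact adjMat_of_adj hcd.symm
    have e02 : A (e 0) (e 2) = 0 := by rw [he0, he2]; exact adjMat_of_not_adj nac
    have e20 : A (e 2) (e 0) = 0 := by
      rw [he0, he2]; exact adjMat_of_not_adj (fun h => nac h.symm)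
    have e03 : A (e 0) (e 3) = 0 := by rw [he0, he3]; exact adjMat_of_not_adj nad
    have e30 : A (e 3) (e 0) = 0 := by
      rw [he0, he3]; exact adjMat_of_not_adj (fun h => nad h.symm)
    have e13 : A (e 1) (e 3) = 0 := by rw [he1, he3]; exact adjMat_of_not_adj nbd
    have e31 : A (e 3) (e 1) = 0 := by
      rw [he1, he3]; exact adjMat_of_not_adj (fun h => nbd h.symm)
    have ediag : ∀ i : Fin 4, A (e i) (e i) = 0 := fun i => adjMat_of_not_adj (G.irrefl)
    ext i j
    rw [hM, Matrix.submatrix_apply]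
    fin_cases i <;> fin_cases j <;>
      simp only [Matrix.cons_val', Matrix.cons_val_zero, Matrix.cons_val_one, Matrix.head_cons,
        Matrix.empty_val', Matrix.cons_val_fin_one, Matrix.head_fin_const, Matrix.cons_val_two,
        Matrix.cons_val_three, Matrix.tail_cons, Matrix.of_apply, Fin.isValue] <;>
      first
        | exact ediag _
        | assumption
  have hback : A = M.submatrix e.symm e.symm := by
    rw [hM, Matrix.submatrix_submatrix]
    simp
  have hdet : A.det = 1 := by
    rw [hback, Matrix.det_submatrix_equiv_self, hMval]
    simp [Matrix.det_succ_row_zero, Fin.sum_univ_succ, Fin.succAbove]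
  exact energy_ge_of_det4 G hcard hdet

lemma star3_iso {G : SimpleGraph V} (hconn : G.Connected) (hcard : Fintype.card V = 3)
    (a b c : V) (hab : a ≠ b) (hac : a ≠ c) (hbc : b ≠ c)
    (hmem : ∀ x : V, x = a ∨ x = b ∨ x = c) (hnadj : ¬ G.Adj a b) :
    Nonempty (G ≃g completeBipartiteGraph (Fin 1) (Fin 2)) := by
  have hadjac : G.Adj a c := by
    obtain ⟨z, hz⟩ := exists_adj hconn hab
    rcases hmem z with rfl | rfl | rfl
    · exact absurd hz G.irrefl
    · exact absurd hz hnadj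
    · exact hz
  have hadjbc : G.Adj b c := by
    obtain ⟨z, hz⟩ := exists_adj hconn hab.symm
    rcases hmem z with rfl | rfl | rfl
    · exact absurd hz (fun h => hnadj h.symm)
    · exact absurd hz G.irrefl
    · exact hz
  apply star_iso c 2 (by omega)
  · intro v hv
    rcases hmem v with rfl | rfl | rfl
    · exact hadjac.symm
    · exact hadjbc.symm
    · exact absurd rfl hv
  · intro p q hpq
    rcases hmem p with rfl | rfl | rfl <;> rcases hmem q with rfl | rfl | rfl
    · exact absurd hpq G.irrefl
    · exact absurd hpq hnadj
    · exact Or.inr rfl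
    · exact absurd hpq (fun h => hnadj h.symm)
    · exact absurd hpq G.irrefl
    · exact Or.inr rfl
    · exact Or.inl rfl
    · exact Or.inl rfl
    · exact absurd hpq G.irrefl

/-- Every connected graph other than `K₁` and the stars `K_{1,i}`, `1 ≤ i ≤ 3`,
has energy at least `4`. -/
theorem energy_ge_four (G : SimpleGraph V) (hconn : G.Connected)
    (hK1 : ¬ Nonempty (G ≃g (⊤ : SimpleGraph (Fin 1))))
    (hstar : ∀ i : ℕ, 1 ≤ i → i ≤ 3 →
      ¬ Nonempty (G ≃g completeBipartiteGraph (Fin 1) (Fin i))) :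
    4 ≤ energy G := by
  letI : DecidableRel G.Adj := Classical.decRel G.Adj
  by_cases hm4 : 4 ≤ #G.edgeFinset
  · exact energy_ge_of_edges G hm4
  push_neg at hm4
  have hm3 : #G.edgeFinset ≤ 3 := by omega
  have hnle : Fintype.card V ≤ #G.edgeFinset + 1 := card_le_edges hconn
  have hn1 : 1 ≤ Fintype.card V := Fintype.card_pos_iff.mpr hconn.nonempty
  rcases Nat.lt_or_ge (Fintype.card V) 2 with h2 | h2
  · -- one vertex : G ≃ K₁
    exfalso
    apply hK1
    have hcard : Fintype.card V = Fintype.card (Fin 1) := by simp; omega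
    have e := Fintype.equivOfCardEq hcard
    refine ⟨⟨e, ?_⟩⟩
    intro u v
    have hsub : Subsingleton V := Fintype.card_le_one_iff_subsingleton.mp (by omega)
    have huv : u = v := Subsingleton.elim u v
    subst huv
    simp [SimpleGraph.top_adj]
  rcases Nat.lt_or_ge (Fintype.card V) 3 with h3 | h3
  · -- two vertices : G ≃ K_{1,1}
    exfalso
    have hcard : Fintype.card V = 2 := by omega
    obtain ⟨u, v, huv, huniv⟩ := Finset.card_eq_two.mp
      (by rw [Finset.card_univ, hcard] : #(univ : Finset V) = 2)
    have hmem : ∀ x : V, x = u ∨ x = v := by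
      intro x
      have hx := Finset.mem_univ x
      rw [huniv] at hx
      simpa using hx
    have hadjuv : G.Adj u v := by
      obtain ⟨z, hz⟩ := exists_adj hconn huv
      rcases hmem z with rfl | rfl
      · exact absurd hz G.irrefl
      · exact hz
    apply hstar 1 (by norm_num) (by norm_num)
    apply star_iso u 1 (by omega)
    · intro x hx
      rcases hmem x with rfl | rfl
      · exact absurd rfl hx
      · exact hadjuv
    · intro p q hpq
      rcases hmem p with rfl | rfl
      · exact Or.inl rfl
      · rcases hmem q with rfl | rfl
        · exact Or.inr rfl
        · exact absurd hpq G.irrefl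
  rcases Nat.lt_or_ge (Fintype.card V) 4 with h4 | h4
  · -- three vertices : complete (triangle) or a star K_{1,2}
    have hcard : Fintype.card V = 3 := by omega
    obtain ⟨u, v, w, huv, huw, hvw, huniv⟩ := Finset.card_eq_three.mp
      (by rw [Finset.card_univ, hcard] : #(univ : Finset V) = 3)
    have hmem : ∀ x : V, x = u ∨ x = v ∨ x = w := by
      intro x
      have hx := Finset.mem_univ x
      rw [huniv] at hx
      simpa using hx
    by_cases hcomp : G.Adj u v ∧ G.Adj u w ∧ G.Adj v w
    · obtain ⟨hA1, hA2, hA3⟩ := hcomp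
      have hA1' := hA1.symm
      have hA2' := hA2.symm
      have hA3' := hA3.symm
      apply energy_complete3 G hcard
      intro i j hij
      rcases hmem i with rfl | rfl | rfl <;> rcases hmem j with rfl | rfl | rfl <;>
        first
          | exact absurd rfl hij
          | assumption
    · exfalso
      apply hstar 2 (by norm_num) (by norm_num)
      rcases not_and_or.mp hcomp with hn | hrest
      · exact star3_iso hconn hcard u v w huv huw hvw hmem hn
      · rcases not_and_or.mp hrest with hn | hn
        · exact star3_iso hconn hcard u w v huw huv (Ne.symm hvw)
            (fun x => by rcases hmem x with h | h | h <;> tauto) hn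
        · exact star3_iso hconn hcard v w u hvw (Ne.symm huv) (Ne.symm huw)
            (fun x => by rcases hmem x with h | h | h <;> tauto) hn
  · -- four vertices : a star K_{1,3} or the path P₄
    have hcard : Fintype.card V = 4 := by omega
    have hm : #G.edgeFinset = 3 := by omega
    by_cases hcen : ∃ x : V, ∀ y, y ≠ x → G.Adj x y
    · -- star K_{1,3}
      exfalso
      obtain ⟨x, hx⟩ := hcen
      have hedge : ∀ a b, G.Adj a b → a = x ∨ b = x := by
        intro a b hab
        by_contra hcon
        push_neg at hcon
        obtain ⟨ha, hb⟩ := hcon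
        set f : V → Sym2 V := fun y => s(x, y) with hfdef
        have hsub : (univ.erase x).image f ⊆ G.edgeFinset := by
          intro s hs
          obtain ⟨y, hy, rfl⟩ := Finset.mem_image.mp hs
          rw [SimpleGraph.mem_edgeFinset]
          exact hx y (Finset.mem_erase.mp hy).1
        have hcardim : #((univ.erase x).image f) = 3 := by
          rw [Finset.card_image_of_injOn]
          · rw [Finset.card_erase_of_mem (mem_univ x), Finset.card_univ, hcard]
          · intro p hp q hq hpq
            simp only [hfdef, Sym2.eq_iff] at hpq
            rcases hpq with ⟨_, h⟩ | ⟨h1, h2⟩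
            · exact h
            · exfalso
              exact (Finset.mem_erase.mp hq).1 h1.symm
        have heq : (univ.erase x).image f = G.edgeFinset :=
          Finset.eq_of_subset_of_card_le hsub (by omega)
        have hmemedge : s(a, b) ∈ G.edgeFinset := SimpleGraph.mem_edgeFinset.mpr hab
        rw [← heq] at hmemedge
        obtain ⟨y, hy, hyeq⟩ := Finset.mem_image.mp hmemedge
        rw [hfdef, Sym2.eq_iff] at hyeq
        rcases hyeq with ⟨h1, _⟩ | ⟨h1, _⟩
        · exact ha h1.symm
        · exact hb h1.symm
      exact hstar 3 (by norm_num) (by norm_num) (star_iso x 3 (by omega)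
        (fun v hv => hx v hv) hedge)
    · push_neg at hcen
      -- all degrees are 1 or 2
      have hdegle : ∀ v : V, G.degree v ≤ 2 := by
        intro v
        obtain ⟨y, hy, hny⟩ := hcen v
        have hsub : G.neighborFinset v ⊆ (univ.erase v).erase y := by
          intro z hz
          rw [SimpleGraph.mem_neighborFinset] at hz
          refine Finset.mem_erase.mpr ⟨?_, Finset.mem_erase.mpr ⟨(G.ne_of_adj hz).symm, mem_univ z⟩⟩
          rintro rfl
          exact hny hz
        have hle := Finset.card_le_card hsub
        rw [SimpleGraph.card_neighborFinset_eq_degree] at hle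
        have h1 : y ∈ univ.erase v := Finset.mem_erase.mpr ⟨hy, mem_univ y⟩
        rw [Finset.card_erase_of_mem h1, Finset.card_erase_of_mem (mem_univ v),
          Finset.card_univ, hcard] at hle
        omega
      have hdegge : ∀ v : V, 1 ≤ G.degree v := by
        intro v
        obtain ⟨y, hy, _⟩ := hcen v
        obtain ⟨z, hz⟩ := exists_adj hconn (Ne.symm hy)
        have : z ∈ G.neighborFinset v := (SimpleGraph.mem_neighborFinset _ _ _).mpr hz
        have := Finset.card_pos.mpr ⟨z, this⟩
        rw [SimpleGraph.card_neighborFinset_eq_degree] at this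
        omega
      have hsum : ∑ v, G.degree v = 6 := by
        rw [SimpleGraph.sum_degrees_eq_twice_card_edges, hm]
      have hex1 : ∃ a, G.degree a = 1 := by
        by_contra hcon
        push_neg at hcon
        have hge : ∀ v : V, 2 ≤ G.degree v := by
          intro v
          have := hdegge v
          have := hcon v
          omega
        have : 8 ≤ ∑ v, G.degree v := by
          calc 8 = ∑ _v : V, 2 := by simp [Finset.sum_const, Finset.card_univ, hcard]
            _ ≤ ∑ v, G.degree v := Finset.sum_le_sum fun v _ => hge v
        omega
      obtain ⟨a, ha⟩ := hex1
      have hnbra : #(G.neighborFinset a) = 1 := by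
        rw [SimpleGraph.card_neighborFinset_eq_degree, ha]
      obtain ⟨b, hb⟩ := Finset.card_eq_one.mp hnbra
      have hab : G.Adj a b := by
        have : b ∈ G.neighborFinset a := by rw [hb]; simp
        exact (SimpleGraph.mem_neighborFinset _ _ _).mp this
      have haonly : ∀ z, G.Adj a z → z = b := by
        intro z hz
        have : z ∈ G.neighborFinset a := (SimpleGraph.mem_neighborFinset _ _ _).mpr hz
        rw [hb] at this
        simpa using this
      have hcdcard : #(univ \ {a, b} : Finset V) = 2 := by
        rw [Finset.card_sdiff_of_subset (Finset.subset_univ _), Finset.card_univ, hcard,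
          Finset.card_pair (G.ne_of_adj hab)]
      obtain ⟨c, d, hcd, hcdeq⟩ := Finset.card_eq_two.mp hcdcard
      have hcmem : c ∈ univ \ ({a, b} : Finset V) := by rw [hcdeq]; simp
      have hdmem : d ∈ univ \ ({a, b} : Finset V) := by rw [hcdeq]; simp
      have hca : c ≠ a := by intro h; rw [h] at hcmem; simp at hcmem
      have hcb : c ≠ b := by intro h; rw [h] at hcmem; simp at hcmem
      have hda : d ≠ a := by intro h; rw [h] at hdmem; simp at hdmem
      have hdb : d ≠ b := by intro h; rw [h] at hdmem; simp at hdmem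
      have hmem : ∀ x : V, x = a ∨ x = b ∨ x = c ∨ x = d := by
        intro x
        by_cases h1 : x = a
        · exact Or.inl h1
        by_cases h2 : x = b
        · exact Or.inr (Or.inl h2)
        have : x ∈ univ \ ({a, b} : Finset V) := by simp [h1, h2]
        rw [hcdeq] at this
        simp at this
        tauto
      have nac : ¬ G.Adj a c := fun h => hcb (haonly c h)
      have nad : ¬ G.Adj a d := fun h => hdb (haonly d h)
      by_cases hbc : G.Adj b c
      · have nbd : ¬ G.Adj b d := by
          intro h
          have hsub : ({a, c, d} : Finset V) ⊆ G.neighborFinset b := by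
            intro z hz
            rw [SimpleGraph.mem_neighborFinset]
            simp only [Finset.mem_insert, Finset.mem_singleton] at hz
            rcases hz with rfl | rfl | rfl
            · exact hab.symm
            · exact hbc
            · exact h
          have hc3 : #({a, c, d} : Finset V) = 3 := by
            rw [Finset.card_insert_of_notMem, Finset.card_insert_of_notMem,
              Finset.card_singleton]
            · simp [hcd]
            · simp [Ne.symm hca, Ne.symm hda, hcd]
          have := Finset.card_le_card hsub
          rw [SimpleGraph.card_neighborFinset_eq_degree, hc3] at this
          have := hdegle b
          omega
        have hcd2 : G.Adj c d := by
          obtain ⟨z, hz⟩ := exists_adj hconn hda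
          rcases hmem z with h | h | h | h <;> rw [h] at hz
          · exact absurd hz.symm nad
          · exact absurd hz.symm nbd
          · exact hz.symm
          · exact absurd hz G.irrefl
        exact path_energy G hcard a b c d hab hbc hcd2 nac nad nbd
          (Ne.symm hca) (Ne.symm hda) (Ne.symm hdb)
      · by_cases hbd : G.Adj b d
        · have hdc : G.Adj d c := by
            obtain ⟨z, hz⟩ := exists_adj hconn hca
            rcases hmem z with h | h | h | h <;> rw [h] at hz
            · exact absurd hz.symm nac
            · exact absurd hz.symm hbc
            · exact absurd hz G.irrefl
            · exact hz.symm
          exact path_energy G hcard a b d c hab hbd hdc nad nac hbc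
            (Ne.symm hda) (Ne.symm hca) (Ne.symm hcb)
        · exfalso
          have hbonly : ∀ z, G.Adj b z → z = a := by
            intro z hz
            rcases hmem z with rfl | rfl | rfl | rfl
            · rfl
            · exact absurd hz G.irrefl
            · exact absurd hz hbc
            · exact absurd hz hbd
          have hclosed : ∀ p ∈ ({a, b} : Set V), ∀ q, G.Adj p q → q ∈ ({a, b} : Set V) := by
            intro p hp q hq
            rcases hp with rfl | rfl
            · right
              exact haonly q hq
            · left
              exact hbonly q hq
          obtain ⟨p⟩ := hconn a c
          have := walk_closed ({a, b} : Set V) hclosed p (Or.inl rfl)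
          rcases this with h | h
          · exact hca h
          · exact hcb h

end GraphEnergy
end

section
/- Let G be a bipartite finite simple graph with m edges whose adjacency matrix has rank r, and let k denote the product of the squares of the positive eigenvalues of G (with multiplicity). Then E(G) ≥ √(4m + r(r−2)·k^{2/r}) (when r ≥ 2; for r = 0 the inequality reads E(G) ≥ 0). -/
set_option linter.unusedSectionVars false

open Finset SimpleGraph

namespace GraphEnergy

variable {V : Type*} [Fintype V] [DecidableEq V]

open Polynomial Matrix

variable {n : Type*} [Fintype n] [DecidableEq n]

lemma my_charpoly_conj (P A Q : Matrix n n ℝ) (hPQ : P * Q = 1) :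
    (P * A * Q).charpoly = A.charpoly := by
  have h1 : C.mapMatrix P * C.mapMatrix Q = (1 : Matrix n n ℝ[X]) := by
    rw [← _root_.map_mul, hPQ, _root_.map_one]
  have hcomm := (Matrix.scalar_commute (X : ℝ[X]) (fun r' => Commute.all _ _)
      (C.mapMatrix P)).eq
  have hc : charmatrix (P * A * Q) =
      (C.mapMatrix P) * charmatrix A * (C.mapMatrix Q) := by
    unfold charmatrix
    rw [mul_sub, sub_mul]
    congr 1
    · rw [← hcomm, mul_assoc, h1, mul_one]
    · rw [← _root_.map_mul, ← _root_.map_mul]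
  rw [Matrix.charpoly, Matrix.charpoly, hc, det_mul, det_mul, mul_comm,
    ← mul_assoc, mul_comm (Matrix.det (C.mapMatrix Q)) _, ← det_mul, h1]
  simp

lemma my_charpoly_diagonal (d : n → ℝ) :
    (diagonal d).charpoly = ∏ i, (X - C (d i)) := by
  have hc : charmatrix (diagonal d) = diagonal (fun i => X - C (d i)) := by
    ext i j
    rcases eq_or_ne i j with rfl | h
    · simp [charmatrix_apply_eq]
    · simp [charmatrix_apply_ne _ _ _ h, diagonal_apply_ne _ h]
  rw [Matrix.charpoly, hc, det_diagonal]

lemma my_charpoly_hermitian (A : Matrix n n ℝ) (hA : A.IsHermitian) :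
    A.charpoly = ∏ i, (X - C (hA.eigenvalues i)) := by
  have hU := (Matrix.mem_unitaryGroup_iff).mp (hA.eigenvectorUnitary).2
  conv_lhs => rw [hA.spectral_theorem, Unitary.conjStarAlgAut_apply]
  rw [my_charpoly_conj _ _ _ hU]
  rw [show (RCLike.ofReal ∘ hA.eigenvalues : n → ℝ) = hA.eigenvalues by
    ext i; simp [RCLike.ofReal_real_eq_id]]
  exact my_charpoly_diagonal _

lemma eig_multiset_symm (A : Matrix n n ℝ) (hA : A.IsHermitian) (S : Matrix n n ℝ)
    (hS : S * S = 1) (hSAS : S * A * S = -A) :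
    Multiset.map (fun i => -hA.eigenvalues i) Finset.univ.val
      = Multiset.map hA.eigenvalues Finset.univ.val := by
  have hneg : (-A).charpoly = A.charpoly := by
    rw [← hSAS, my_charpoly_conj _ _ _ hS]
  set φ : ℝ[X] →ₐ[ℝ] ℝ[X] := aeval (-X : ℝ[X]) with hφ
  have hmap : φ.mapMatrix (charmatrix A) = -(charmatrix (-A)) := by
    ext i j
    rcases eq_or_ne i j with rfl | h
    · simp [charmatrix_apply_eq, hφ]
      ring
    · simp [charmatrix_apply_ne _ _ _ h, hφ]
  have h1 : φ A.charpoly = (-1) ^ Fintype.card n * A.charpoly := by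
    rw [Matrix.charpoly, AlgHom.map_det, hmap, det_neg, ← Matrix.charpoly, hneg]
    rfl
  have h2 : φ A.charpoly = (-1) ^ Fintype.card n * ∏ i, (X - C (-hA.eigenvalues i)) := by
    rw [my_charpoly_hermitian A hA, map_prod]
    have he : ∀ i : n, φ (X - C (hA.eigenvalues i)) = -1 * (X - C (-hA.eigenvalues i)) := by
      intro i; simp [hφ]; ring
    rw [Finset.prod_congr rfl (fun i _ => he i), Finset.prod_mul_distrib,
      Finset.prod_const, Finset.card_univ]
  have h3 : ∏ i, (X - C (-hA.eigenvalues i)) = ∏ i, (X - C (hA.eigenvalues i)) := by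
    have := h1.symm.trans h2
    rw [my_charpoly_hermitian A hA] at this
    exact (mul_left_cancel₀ (pow_ne_zero _ (by norm_num : (-1 : ℝ[X]) ≠ 0)) this).symm
  have key := congrArg Polynomial.roots h3
  rwa [Finset.prod_eq_multiset_prod, Finset.prod_eq_multiset_prod,
    show Multiset.map (fun i => X - C (-hA.eigenvalues i)) Finset.univ.val
      = Multiset.map (fun a => X - C a) (Multiset.map (fun i => -hA.eigenvalues i) Finset.univ.val)
      from by rw [Multiset.map_map]; rfl,
    show Multiset.map (fun i => X - C (hA.eigenvalues i)) Finset.univ.val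
      = Multiset.map (fun a => X - C a) (Multiset.map hA.eigenvalues Finset.univ.val)
      from by rw [Multiset.map_map]; rfl,
    roots_multiset_prod_X_sub_C, roots_multiset_prod_X_sub_C] at key

lemma my_trace_sq (A : Matrix n n ℝ) (hA : A.IsHermitian) :
    Matrix.trace (A * A) = ∑ i, hA.eigenvalues i ^ 2 := by
  have hofr : (RCLike.ofReal ∘ hA.eigenvalues : n → ℝ) = hA.eigenvalues := by
    ext i; simp [RCLike.ofReal_real_eq_id]
  set U := (hA.eigenvectorUnitary : Matrix n n ℝ) with hU
  have hsU : star U * U = 1 := Matrix.mem_unitaryGroup_iff'.mp (hA.eigenvectorUnitary).2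
  set D := diagonal hA.eigenvalues with hD
  have hspec : A = U * D * star U := by
    conv_lhs => rw [hA.spectral_theorem, Unitary.conjStarAlgAut_apply]
    rw [hofr]
  calc Matrix.trace (A * A)
      = Matrix.trace (U * (D * (star U * (U * (D * star U))))) := by
        rw [hspec]; simp only [mul_assoc]
    _ = Matrix.trace (U * (D * (D * star U))) := by
        rw [← mul_assoc (star U) U, hsU, one_mul]
    _ = Matrix.trace (D * (D * (star U * U))) := by
        rw [Matrix.trace_mul_comm]; simp only [mul_assoc]
    _ = ∑ i, hA.eigenvalues i ^ 2 := by
        rw [hsU, mul_one, hD, diagonal_mul_diagonal, Matrix.trace_diagonal]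
        simp [sq]


open Finset

variable {ι : Type*} [DecidableEq ι]

lemma prod_offDiag (s : Finset ι) (f : ι → ℝ) (hf : ∀ i ∈ s, 0 < f i) :
    ∏ a ∈ s.offDiag, (f a.1 * f a.2) = (∏ i ∈ s, f i) ^ (2 * s.card - 2) := by
  have hP : (0:ℝ) < ∏ i ∈ s, f i := Finset.prod_pos hf
  have hsq : ∏ a ∈ s.diag, (f a.1 * f a.2) = (∏ i ∈ s, f i) ^ 2 := by
    rw [Finset.prod_diag]
    rw [sq, ← Finset.prod_mul_distrib]
  have hfull : ∏ a ∈ s ×ˢ s, (f a.1 * f a.2) = (∏ i ∈ s, f i) ^ (2 * s.card) := by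
    rw [Finset.prod_product]
    have : ∀ i ∈ s, ∏ j ∈ s, (f i * f j) = f i ^ s.card * ∏ j ∈ s, f j := by
      intro i _
      rw [Finset.prod_mul_distrib, Finset.prod_const]
    rw [Finset.prod_congr rfl this, Finset.prod_mul_distrib, Finset.prod_pow,
      Finset.prod_const]
    rw [← pow_add]
    ring_nf
  have hunion : (∏ a ∈ s.diag, (f a.1 * f a.2)) * ∏ a ∈ s.offDiag, (f a.1 * f a.2)
      = (∏ i ∈ s, f i) ^ (2 * s.card) := by
    rw [← Finset.prod_union (Finset.disjoint_diag_offDiag s), Finset.diag_union_offDiag, hfull]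
  rcases Nat.eq_zero_or_pos s.card with h0 | hpos
  · have : s = ∅ := Finset.card_eq_zero.mp h0
    subst this; simp
  · have h2 : 2 * s.card = 2 + (2 * s.card - 2) := by omega
    rw [hsq] at hunion
    have := hunion
    rw [h2, pow_add] at this
    exact mul_left_cancel₀ (pow_ne_zero _ hP.ne') this

lemma sum_offDiag_ge (s : Finset ι) (f : ι → ℝ) (hf : ∀ i ∈ s, 0 < f i) :
    (s.card : ℝ) * ((s.card : ℝ) - 1) * (∏ i ∈ s, f i ^ 2) ^ ((1:ℝ)/(s.card:ℝ))
      ≤ ∑ a ∈ s.offDiag, f a.1 * f a.2 := by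
  rcases le_or_gt s.card 1 with hp | hp
  · have hN : s.offDiag.card = 0 := by
      rw [Finset.offDiag_card]
      rcases Nat.le_one_iff_eq_zero_or_eq_one.mp hp with h | h <;> rw [h]
    have hempty : s.offDiag = ∅ := Finset.card_eq_zero.mp hN
    rw [hempty, Finset.sum_empty]
    interval_cases h : s.card <;> simp
  · have hP : (0:ℝ) < ∏ i ∈ s, f i := Finset.prod_pos hf
    have hNnat : s.offDiag.card = s.card * s.card - s.card := Finset.offDiag_card s
    have hNpos : 0 < s.offDiag.card := by
      rw [hNnat]
      have : s.card < s.card * s.card := by nlinarith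
      omega
    have hNR : (0:ℝ) < (s.offDiag.card:ℝ) := by exact_mod_cast hNpos
    have hpR : (2:ℝ) ≤ (s.card:ℝ) := by exact_mod_cast hp
    have hc2 : ((s.offDiag.card : ℕ) : ℝ) = (s.card:ℝ) * (s.card:ℝ) - (s.card:ℝ) := by
      have h1 : s.card ≤ s.card * s.card := Nat.le_mul_of_pos_left s.card (by omega)
      rw [hNnat, Nat.cast_sub h1]; push_cast; ring
    have hzpos : ∀ a ∈ s.offDiag, 0 < f a.1 * f a.2 := by
      intro a ha
      obtain ⟨h1, h2, _⟩ := Finset.mem_offDiag.mp ha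
      exact mul_pos (hf _ h1) (hf _ h2)
    have hamgm := Real.geom_mean_le_arith_mean_weighted s.offDiag
      (fun _ => 1 / (s.offDiag.card:ℝ)) (fun a => f a.1 * f a.2)
      (fun i _ => by positivity)
      (by rw [Finset.sum_const, nsmul_eq_mul, mul_one_div, div_self hNR.ne'])
      (fun i hi => (hzpos i hi).le)
    have hprodrw : ∏ a ∈ s.offDiag, (f a.1 * f a.2) ^ ((1:ℝ)/(s.offDiag.card:ℝ))
        = (∏ i ∈ s, f i ^ 2) ^ ((1:ℝ)/(s.card:ℝ)) := by
      rw [Real.finset_prod_rpow _ _ (fun i hi => (hzpos i hi).le), prod_offDiag s f hf]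
      rw [← Real.rpow_natCast (∏ i ∈ s, f i) (2 * s.card - 2), ← Real.rpow_mul hP.le]
      rw [Finset.prod_pow, ← Real.rpow_natCast (∏ i ∈ s, f i) 2, ← Real.rpow_mul hP.le]
      congr 1
      have hc1 : ((2 * s.card - 2 : ℕ) : ℝ) = 2 * (s.card:ℝ) - 2 := by
        have : 2 ≤ 2 * s.card := by omega
        rw [Nat.cast_sub this]; push_cast; ring
      rw [hc1, hc2]
      have hpne : (s.card:ℝ) ≠ 0 := by positivity
      have hpne1 : (s.card:ℝ) - 1 ≠ 0 := by nlinarith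
      push_cast
      rw [mul_one_div, mul_one_div, div_eq_div_iff (by nlinarith) hpne]
      ring
    rw [hprodrw] at hamgm
    rw [← Finset.mul_sum] at hamgm
    have hNR2 : ((s.offDiag.card:ℝ)) = (s.card:ℝ) * ((s.card:ℝ) - 1) := by
      rw [hc2]; ring
    calc (s.card : ℝ) * ((s.card : ℝ) - 1) * (∏ i ∈ s, f i ^ 2) ^ ((1:ℝ)/(s.card:ℝ))
        = (s.offDiag.card:ℝ) * (∏ i ∈ s, f i ^ 2) ^ ((1:ℝ)/(s.card:ℝ)) := by rw [hNR2]
      _ ≤ (s.offDiag.card:ℝ) * ((1 / (s.offDiag.card:ℝ)) * ∑ a ∈ s.offDiag, f a.1 * f a.2) :=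
          mul_le_mul_of_nonneg_left hamgm hNR.le
      _ = ∑ a ∈ s.offDiag, f a.1 * f a.2 := by
          rw [← mul_assoc, mul_one_div, div_self hNR.ne', one_mul]

/-- For a bipartite graph `G` with `m` edges, rank `r` and `k` the product of the squares of
the positive eigenvalues, `E(G) ≥ √(4m + r(r-2)·k^(2/r))`. -/
theorem energy_ge_sqrt_aux (G : SimpleGraph V) [DecidableRel G.Adj] (hbip : G.Colorable 2)
    (m r : ℕ) (k : ℝ) (hm : m = G.edgeFinset.card) (hr : r = grank G)
    (hk : k = ∏ i ∈ Finset.univ.filter (fun i : V => 0 < eig G i), (eig G i) ^ 2) :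
    Real.sqrt (4 * (m : ℝ) + (r : ℝ) * ((r : ℝ) - 2) * k ^ ((2 : ℝ) / (r : ℝ))) ≤
      energy G := by
  classical
  have hAeq : adjMat G = G.adjMatrix ℝ := by
    ext i j
    by_cases h : G.Adj i j <;> simp [adjMat, h]
  set f := eig G with hf
  obtain ⟨c⟩ := hbip
  set d : V → ℝ := fun v => if c v = 0 then 1 else -1 with hd
  have hdsq : ∀ v, d v * d v = 1 := by
    intro v; by_cases h : c v = 0 <;> simp [hd, h]
  have hS : Matrix.diagonal d * Matrix.diagonal d = 1 := by
    rw [Matrix.diagonal_mul_diagonal]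
    have : (fun v => d v * d v) = fun _ => (1:ℝ) := funext hdsq
    rw [this, Matrix.diagonal_one]
  have hkey2 : ∀ a b : Fin 2, a ≠ b →
      (if a = 0 then (1:ℝ) else -1) * (if b = 0 then 1 else -1) = -1 := by
    intro a b hab
    fin_cases a <;> fin_cases b <;> simp_all
  have hSAS : Matrix.diagonal d * adjMat G * Matrix.diagonal d = -(adjMat G) := by
    ext i j
    rw [Matrix.mul_diagonal, Matrix.diagonal_mul, Matrix.neg_apply, hAeq]
    by_cases h : G.Adj i j
    · have hne : c i ≠ c j := c.valid h
      simp only [SimpleGraph.adjMatrix_apply, if_pos h, mul_one]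
      rw [show d i * d j = -1 from hkey2 _ _ hne]
    · simp [h]
  have hsym := eig_multiset_symm (adjMat G) (adjMat_isHermitian G) (Matrix.diagonal d) hS hSAS
  rw [show (adjMat_isHermitian G).eigenvalues = f from rfl] at hsym
  have hg : ∀ g : ℝ → ℝ, ∑ i, g (f i) = ∑ i, g (-(f i)) := by
    intro g
    calc ∑ i, g (f i) = ((Multiset.map f Finset.univ.val).map g).sum := by
          rw [Finset.sum_eq_multiset_sum, Multiset.map_map]; rfl
      _ = ((Multiset.map (fun i => -f i) Finset.univ.val).map g).sum := by rw [hsym]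
      _ = ∑ i, g (-f i) := by
          rw [Multiset.map_map, Finset.sum_eq_multiset_sum]; rfl
  set Pos := Finset.univ.filter (fun i : V => 0 < f i) with hPos
  set Neg := Finset.univ.filter (fun i : V => f i < 0) with hNeg
  have key : ∀ h : ℝ → ℝ, ∑ i ∈ Pos, h (f i) = ∑ i ∈ Neg, h (-f i) := by
    intro h
    have hgh := hg (fun x => if 0 < x then h x else 0)
    rw [hPos, hNeg, Finset.sum_filter, Finset.sum_filter, hgh]
    exact Finset.sum_congr rfl (fun i _ => by simp only [neg_pos])
  have hPsum : ∑ i ∈ Pos, f i = ∑ i ∈ Neg, -f i := key id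
  have hPsq : ∑ i ∈ Pos, f i ^ 2 = ∑ i ∈ Neg, f i ^ 2 := by
    have := key (fun x => x ^ 2)
    simpa [neg_sq] using this
  have hPcard : Pos.card = Neg.card := by
    have h1 := key (fun _ => (1:ℝ))
    rw [Finset.sum_const, Finset.sum_const, nsmul_eq_mul, nsmul_eq_mul, mul_one, mul_one] at h1
    exact_mod_cast h1
  -- rank
  have hfeig : f = (adjMat_isHermitian G).eigenvalues := rfl
  have hdisj : Disjoint Pos Neg := by
    rw [Finset.disjoint_left]
    intro a ha hb
    rw [hPos, Finset.mem_filter] at ha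
    rw [hNeg, Finset.mem_filter] at hb
    exact absurd (ha.2.trans hb.2) (lt_irrefl 0)
  have hrank : r = Pos.card + Neg.card := by
    rw [hr, grank, (adjMat_isHermitian G).rank_eq_card_non_zero_eigs, Fintype.card_subtype]
    rw [show (Finset.univ.filter fun i => (adjMat_isHermitian G).eigenvalues i ≠ 0)
        = Pos ∪ Neg by
      ext i
      rw [Finset.mem_filter, Finset.mem_union, hPos, hNeg, Finset.mem_filter,
        Finset.mem_filter, ← hfeig]
      constructor
      · rintro ⟨hi, hne⟩
        rcases hne.lt_or_gt with h | h
        · exact Or.inr ⟨hi, h⟩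
        · exact Or.inl ⟨hi, h⟩
      · rintro (⟨hi, h⟩ | ⟨hi, h⟩)
        · exact ⟨hi, h.ne'⟩
        · exact ⟨hi, h.ne⟩]
    exact Finset.card_union_of_disjoint hdisj
  have hr2p : r = 2 * Pos.card := by omega
  -- trace identity
  have htr : ∑ i, f i ^ 2 = 2 * (m:ℝ) := by
    have h1 := my_trace_sq (adjMat G) (adjMat_isHermitian G)
    have h2 : Matrix.trace (adjMat G * adjMat G) = 2 * (m:ℝ) := by
      rw [hAeq]
      simp only [Matrix.trace, Matrix.diag]
      rw [Finset.sum_congr rfl (fun i (_ : i ∈ Finset.univ) =>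
        (G.adjMatrix_mul_self_apply_self i : _ = ((G.degree i : ℝ))))]
      rw [← Nat.cast_sum, SimpleGraph.sum_degrees_eq_twice_card_edges, hm]
      push_cast; ring
    rw [← hfeig] at h1
    exact h1.symm.trans h2
  have hsplitfun : ∀ x : ℝ, x ^ 2 = (if 0 < x then x ^ 2 else 0) + (if x < 0 then x ^ 2 else 0) := by
    intro x
    rcases lt_trichotomy x 0 with h | h | h
    · rw [if_neg (by linarith), if_pos h]; ring
    · simp [h]
    · rw [if_pos h, if_neg (by linarith)]; ring
  have hsplit : ∑ i, f i ^ 2 = ∑ i ∈ Pos, f i ^ 2 + ∑ i ∈ Neg, f i ^ 2 := by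
    rw [hPos, hNeg, Finset.sum_filter, Finset.sum_filter, ← Finset.sum_add_distrib]
    exact Finset.sum_congr rfl (fun i _ => hsplitfun (f i))
  have hm' : ∑ i ∈ Pos, f i ^ 2 = (m:ℝ) := by
    rw [hsplit, ← hPsq] at htr
    linarith
  have habs : ∀ x : ℝ, |x| = (if 0 < x then x else 0) + (if x < 0 then -x else 0) := by
    intro x
    rcases lt_trichotomy x 0 with h | h | h
    · rw [abs_of_neg h, if_neg (by linarith), if_pos h]; ring
    · simp [h]
    · rw [abs_of_pos h, if_pos h, if_neg (by linarith)]; ring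
  have hE : energy G = 2 * ∑ i ∈ Pos, f i := by
    unfold energy
    rw [← hf]
    calc ∑ i, |f i| = ∑ i, ((if 0 < f i then f i else 0) + (if f i < 0 then -f i else 0)) :=
          Finset.sum_congr rfl (fun i _ => habs (f i))
      _ = (∑ i ∈ Pos, f i) + ∑ i ∈ Neg, -f i := by
          rw [Finset.sum_add_distrib, hPos, hNeg, Finset.sum_filter, Finset.sum_filter]
      _ = 2 * ∑ i ∈ Pos, f i := by rw [← hPsum]; ring
  have hEnn : 0 ≤ energy G := by
    unfold energy; exact Finset.sum_nonneg fun i _ => abs_nonneg _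
  have hfpos : ∀ i ∈ Pos, 0 < f i := by
    intro i hi; rw [hPos, Finset.mem_filter] at hi; exact hi.2
  have hoff := sum_offDiag_ge Pos f hfpos
  rw [← hk] at hoff
  have hsq2 : (∑ i ∈ Pos, f i) ^ 2 = ∑ i ∈ Pos, f i ^ 2 + ∑ a ∈ Pos.offDiag, f a.1 * f a.2 := by
    rw [sq, Finset.sum_mul_sum, ← Finset.sum_product', ← Finset.diag_union_offDiag,
      Finset.sum_union (Finset.disjoint_diag_offDiag _), Finset.sum_diag]
    congr 1
    exact Finset.sum_congr rfl (fun i _ => (sq (f i)).symm ▸ (sq (f i)) ▸ rfl)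
  have hexp : (2:ℝ)/(r:ℝ) = 1/((Pos.card : ℕ):ℝ) := by
    rw [hr2p]; push_cast
    rcases eq_or_ne ((Pos.card:ℝ)) 0 with h | h
    · rw [h]; simp
    · field_simp
  have hcoef : (r:ℝ) * ((r:ℝ) - 2) = 4 * ((Pos.card:ℝ) * ((Pos.card:ℝ) - 1)) := by
    rw [hr2p]; push_cast; ring
  rw [← Real.sqrt_sq hEnn]
  apply Real.sqrt_le_sqrt
  rw [hE, hexp, hcoef]
  have hexpand : (2 * ∑ i ∈ Pos, f i) ^ 2
      = 4 * ((m:ℝ) + ∑ a ∈ Pos.offDiag, f a.1 * f a.2) := by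
    rw [mul_pow, hsq2, hm']; ring
  rw [hexpand]
  nlinarith [hoff]
end GraphEnergy
end

section
/- If T is a tree with at least two vertices that has no perfect matching, then T has at least two distinct maximum matchings, i.e., there exist two distinct matchings of T each having the maximum possible number of edges. -/
set_option linter.unusedSectionVars false

open Finset SimpleGraph

namespace GraphEnergy

variable {V : Type*} [Fintype V] [DecidableEq V]

/-- A matching of `G`: a finite set of edges of `G`, pairwise sharing no vertex. -/
def IsMatching (G : SimpleGraph V) (M : Finset (Sym2 V)) : Prop :=
  ↑M ⊆ G.edgeSet ∧ ∀ e ∈ M, ∀ f ∈ M, e ≠ f → ∀ v : V, ¬(v ∈ e ∧ v ∈ f)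

/-- A maximum matching of `G`: a matching of the largest possible cardinality. -/
def IsMaxMatching (G : SimpleGraph V) (M : Finset (Sym2 V)) : Prop :=
  IsMatching G M ∧ ∀ N : Finset (Sym2 V), IsMatching G N → N.card ≤ M.card

/-- A perfect matching of `G`: a matching covering every vertex. -/
def IsPerfectMatching (G : SimpleGraph V) (M : Finset (Sym2 V)) : Prop :=
  IsMatching G M ∧ ∀ v : V, ∃ e ∈ M, v ∈ e

/-- A tree with at least two vertices and no perfect matching has at least two distinct
maximum matchings. -/
theorem two_max_matchings_of_no_perfect_matching (G : SimpleGraph V) (hT : G.IsTree)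
    (hcard : 2 ≤ Fintype.card V) (hpm : ¬ ∃ M : Finset (Sym2 V), IsPerfectMatching G M) :
    ∃ M₁ M₂ : Finset (Sym2 V),
      IsMaxMatching G M₁ ∧ IsMaxMatching G M₂ ∧ M₁ ≠ M₂ := by
  classical
  -- obtain a maximum matching M
  have hne : (Finset.univ.filter fun M : Finset (Sym2 V) => IsMatching G M).Nonempty := by
    refine ⟨∅, ?_⟩
    simp [IsMatching]
  obtain ⟨M, hMmem, hMmax⟩ := Finset.exists_max_image _ Finset.card hne
  have hM : IsMatching G M := (Finset.mem_filter.mp hMmem).2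
  have hmax : ∀ N : Finset (Sym2 V), IsMatching G N → N.card ≤ M.card := by
    intro N hN
    exact hMmax N (Finset.mem_filter.mpr ⟨Finset.mem_univ _, hN⟩)
  -- M is not perfect, so some vertex v is uncovered
  have : ¬ ∀ w : V, ∃ e ∈ M, w ∈ e := fun h => hpm ⟨M, hM, h⟩
  push_neg at this
  obtain ⟨v, hv⟩ := this
  -- v has a neighbor u
  obtain ⟨u, hu⟩ := Fintype.exists_ne_of_one_lt_card (by omega) v
  have hreach : G.Reachable v u := hT.isConnected v u
  obtain ⟨w⟩ := hreach
  have hadj : ∃ b : V, G.Adj v b := by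
    cases w with
    | nil => exact absurd rfl hu.symm
    | cons h p => exact ⟨_, h⟩
  obtain ⟨b, hvb⟩ := hadj
  -- b is covered by M, else inserting s(v,b) would give a bigger matching
  have hbcov : ∃ e ∈ M, b ∈ e := by
    by_contra hb
    push_neg at hb
    have hnotmem : s(v, b) ∉ M := fun h => hv _ h (by simp)
    have hins : IsMatching G (insert s(v, b) M) := by
      constructor
      · intro e he
        simp only [Finset.coe_insert, Set.mem_insert_iff] at he
        rcases he with rfl | he
        · exact hvb
        · exact hM.1 he
      · intro e he f hf hef x hx
        simp only [Finset.mem_insert] at he hf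
        rcases he with rfl | he <;> rcases hf with rfl | hf
        · exact hef rfl
        · rcases Sym2.mem_iff.mp hx.1 with rfl | rfl
          · exact hv _ hf hx.2
          · exact hb _ hf hx.2
        · rcases Sym2.mem_iff.mp hx.2 with rfl | rfl
          · exact hv _ he hx.1
          · exact hb _ he hx.1
        · exact hM.2 e he f hf hef x hx
    have := hmax _ hins
    rw [Finset.card_insert_of_notMem hnotmem] at this
    omega
  obtain ⟨e, heM, hbe⟩ := hbcov
  -- build the second matching
  set M' : Finset (Sym2 V) := insert s(v, b) (M.erase e) with hM'def
  have hvbnotM : s(v, b) ∉ M := fun h => hv _ h (by simp)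
  have hM'match : IsMatching G M' := by
    constructor
    · intro f hf
      simp only [hM'def, Finset.coe_insert, Set.mem_insert_iff] at hf
      rcases hf with rfl | hf
      · exact hvb
      · exact hM.1 (Finset.mem_of_mem_erase (by exact_mod_cast hf))
    · intro f hf g hg hfg x hx
      simp only [hM'def, Finset.mem_insert] at hf hg
      have key : ∀ g' ∈ M.erase e, ∀ y : V, ¬(y ∈ s(v, b) ∧ y ∈ g') := by
        intro g' hg' y hy
        rcases Sym2.mem_iff.mp hy.1 with rfl | rfl
        · exact hv _ (Finset.mem_of_mem_erase hg') hy.2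
        · exact hM.2 e heM g' (Finset.mem_of_mem_erase hg')
            (Ne.symm (Finset.ne_of_mem_erase hg')) y ⟨hbe, hy.2⟩
      rcases hf with rfl | hf <;> rcases hg with rfl | hg
      · exact hfg rfl
      · exact key g hg x hx
      · exact key f hf x ⟨hx.2, hx.1⟩
      · exact hM.2 f (Finset.mem_of_mem_erase hf) g (Finset.mem_of_mem_erase hg) hfg x hx
  have hnotmem' : s(v, b) ∉ M.erase e := fun h => hvbnotM (Finset.mem_of_mem_erase h)
  have hcard' : M'.card = M.card := by
    rw [hM'def, Finset.card_insert_of_notMem hnotmem', Finset.card_erase_of_mem heM]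
    have : 1 ≤ M.card := Finset.card_pos.mpr ⟨e, heM⟩
    omega
  refine ⟨M, M', ⟨hM, hmax⟩, ⟨hM'match, fun N hN => hcard' ▸ hmax N hN⟩, ?_⟩
  intro h
  exact hvbnotM (h ▸ Finset.mem_insert_self _ _)
end GraphEnergy
end

section
/- For every finite simple graph G of order n, E(G) ≥ 2(n − χ(Ḡ)), where χ(Ḡ) is the chromatic number of the complement of G. -/
set_option linter.unusedSectionVars false
set_option maxHeartbeats 1000000

open Finset SimpleGraph

namespace GraphEnergy

variable {V : Type*} [Fintype V] [DecidableEq V]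

lemma two_mul_trace_le_energy (G : SimpleGraph V) (P : Matrix V V ℝ)
    (h0 : ∀ v : V → ℝ, 0 ≤ ∑ a, ∑ b, v a * P a b * v b)
    (h1 : ∀ v : V → ℝ, (∑ a, ∑ b, v a * P a b * v b) ≤ ∑ a, v a ^ 2) :
    2 * (P * adjMat G).trace ≤ energy G := by
  classical
  have hA := adjMat_isHermitian G
  set U : Matrix V V ℝ := (hA.eigenvectorUnitary : Matrix V V ℝ) with hUdef
  have hUU : star U * U = 1 := by
    exact Matrix.mem_unitaryGroup_iff'.mp hA.eigenvectorUnitary.2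
  have hspec : adjMat G = U * Matrix.diagonal (eig G) * star U := by
    have h := hA.spectral_theorem
    rw [RCLike.ofReal_real_eq_id] at h
    simpa [eig, Function.id_comp] using h
  set t : V → ℝ := fun i => (star U * P * U) i i with htdef
  -- expansion of t
  have hti : ∀ i : V, t i = ∑ a, ∑ b, U a i * P a b * U b i := by
    intro i
    simp only [htdef, Matrix.mul_apply, Finset.sum_mul, Matrix.star_apply, star_trivial]
    rw [Finset.sum_comm]
  have hunit : ∀ i : V, ∑ a, (U a i) ^ 2 = 1 := by
    intro i
    have := congrFun (congrFun hUU i) i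
    simp only [Matrix.mul_apply, Matrix.star_apply, star_trivial, Matrix.one_apply_eq] at this
    simpa [sq] using this
  have ht0 : ∀ i, 0 ≤ t i := fun i => by rw [hti i]; exact h0 _
  have ht1 : ∀ i, t i ≤ 1 := fun i => by
    rw [hti i]
    calc (∑ a, ∑ b, U a i * P a b * U b i) ≤ ∑ a, (U a i) ^ 2 := h1 _
      _ = 1 := hunit i
  have htrace : (P * adjMat G).trace = ∑ i, t i * eig G i := by
    calc (P * adjMat G).trace
        = (P * (U * Matrix.diagonal (eig G) * star U)).trace := by rw [← hspec]
      _ = ((P * U * Matrix.diagonal (eig G)) * star U).trace := by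
            simp [Matrix.mul_assoc]
      _ = (star U * (P * U * Matrix.diagonal (eig G))).trace := by
            rw [Matrix.trace_mul_comm]
      _ = ((star U * P * U) * Matrix.diagonal (eig G)).trace := by
            simp [Matrix.mul_assoc]
      _ = ∑ i, t i * eig G i := by
            simp [Matrix.trace, Matrix.diag, Matrix.mul_diagonal, htdef]
  have heig0 : ∑ i, eig G i = 0 := by
    have h1' : (adjMat G).trace = ∑ i, eig G i := by
      calc (adjMat G).trace
          = (U * Matrix.diagonal (eig G) * star U).trace := by rw [← hspec]
        _ = (star U * U * Matrix.diagonal (eig G)).trace := by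
              rw [Matrix.trace_mul_cycle]
        _ = (Matrix.diagonal (eig G)).trace := by rw [hUU, Matrix.one_mul]
        _ = ∑ i, eig G i := by simp [Matrix.trace_diagonal]
    have h2' : (adjMat G).trace = 0 := by
      letI := Classical.decRel G.Adj
      simp [adjMat]
    rw [← h1', h2']
  have hterm : ∀ i : V, (2 * t i - 1) * eig G i ≤ |eig G i| := by
    intro i
    calc (2 * t i - 1) * eig G i ≤ |(2 * t i - 1) * eig G i| := le_abs_self _
      _ = |2 * t i - 1| * |eig G i| := abs_mul _ _
      _ ≤ 1 * |eig G i| := by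
          apply mul_le_mul_of_nonneg_right _ (abs_nonneg _)
          rw [abs_le]
          constructor <;> [linarith [ht0 i]; linarith [ht1 i]]
      _ = |eig G i| := one_mul _
  have hsum : ∑ i, (2 * t i - 1) * eig G i = 2 * (P * adjMat G).trace := by
    rw [htrace, Finset.mul_sum]
    rw [← sub_zero (∑ i, 2 * (t i * eig G i)), ← heig0, ← Finset.sum_sub_distrib]
    exact Finset.sum_congr rfl fun i _ => by ring
  calc 2 * (P * adjMat G).trace = ∑ i, (2 * t i - 1) * eig G i := hsum.symm
    _ ≤ ∑ i, |eig G i| := Finset.sum_le_sum fun i _ => hterm i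
    _ = energy G := rfl

/-- For every graph `G` of order `n`, `E(G) ≥ 2(n - χ(Ḡ))`. -/
theorem energy_ge_two_mul_n_sub_chromatic_compl (G : SimpleGraph V) :
    2 * ((Fintype.card V : ℝ) - (Gᶜ.chromaticNumber.toNat : ℝ)) ≤ energy G := by
  classical
  obtain ⟨C⟩ := Gᶜ.colorable_chromaticNumber_of_fintype
  set k := Gᶜ.chromaticNumber.toNat with hkdef
  let c : V → Fin k := C
  have hadj : ∀ a b : V, a ≠ b → c a = c b → G.Adj a b := by
    intro a b hab hcc
    by_contra h
    exact C.valid ((compl_adj G a b).mpr ⟨hab, h⟩) hcc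
  let S : Fin k → Finset V := fun j => univ.filter (fun a => c a = j)
  let N : Fin k → ℕ := fun j => (S j).card
  have hmem : ∀ a : V, a ∈ S (c a) := fun a => by simp [S]
  have hNpos : ∀ a : V, 0 < N (c a) := fun a => Finset.card_pos.mpr ⟨a, hmem a⟩
  let P : Matrix V V ℝ := Matrix.of (fun a b => if c a = c b then ((N (c a) : ℝ))⁻¹ else 0)
  -- the quadratic form of P
  have hquad : ∀ v : V → ℝ, (∑ a, ∑ b, v a * P a b * v b)
      = ∑ j : Fin k, (∑ a ∈ S j, v a) ^ 2 * ((N j : ℝ))⁻¹ := by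
    intro v
    rw [← Finset.sum_fiberwise univ c (fun a => ∑ b, v a * P a b * v b)]
    apply Finset.sum_congr rfl
    intro j _
    have hinner : ∀ a ∈ S j, (∑ b, v a * P a b * v b)
        = ∑ b ∈ S j, v a * v b * ((N j : ℝ))⁻¹ := by
      intro a ha
      have hca : c a = j := (Finset.mem_filter.mp ha).2
      rw [Finset.sum_filter]
      apply Finset.sum_congr rfl
      intro b _
      by_cases h : c b = j
      · have hab : c a = c b := by rw [hca, h]
        have hP : P a b = ((N j : ℝ))⁻¹ := by simp [P, hab, hca, h]
        rw [if_pos h, hP]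
        ring
      · rw [if_neg h]
        have : ¬ (c a = c b) := by rw [hca]; exact fun hh => h hh.symm
        simp [P, this]
    calc (∑ a ∈ Finset.filter (fun a => c a = j) univ, ∑ b, v a * P a b * v b)
        = ∑ a ∈ S j, ∑ b ∈ S j, v a * v b * ((N j : ℝ))⁻¹ :=
          Finset.sum_congr rfl hinner
      _ = (∑ a ∈ S j, v a) ^ 2 * ((N j : ℝ))⁻¹ := by
          simp only [← Finset.sum_mul]
          rw [← Finset.sum_mul_sum]
          ring
  have h0 : ∀ v : V → ℝ, 0 ≤ ∑ a, ∑ b, v a * P a b * v b := by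
    intro v
    rw [hquad v]
    apply Finset.sum_nonneg
    intro j _
    positivity
  have h1 : ∀ v : V → ℝ, (∑ a, ∑ b, v a * P a b * v b) ≤ ∑ a, v a ^ 2 := by
    intro v
    rw [hquad v, ← Finset.sum_fiberwise univ c (fun a => v a ^ 2)]
    apply Finset.sum_le_sum
    intro j _
    show (∑ a ∈ S j, v a) ^ 2 * ((N j : ℝ))⁻¹ ≤ ∑ a ∈ S j, v a ^ 2
    rcases Nat.eq_zero_or_pos (N j) with h | h
    · have hSe : S j = ∅ := Finset.card_eq_zero.mp h
      simp [hSe]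
    · have hN0 : ((N j : ℝ)) ≠ 0 := by positivity
      have hcs : (∑ a ∈ S j, v a) ^ 2 ≤ (N j : ℝ) * ∑ a ∈ S j, v a ^ 2 :=
        sq_sum_le_card_mul_sum_sq
      calc (∑ a ∈ S j, v a) ^ 2 * ((N j : ℝ))⁻¹
          ≤ ((N j : ℝ) * ∑ a ∈ S j, v a ^ 2) * ((N j : ℝ))⁻¹ :=
            mul_le_mul_of_nonneg_right hcs (by positivity)
        _ = ∑ a ∈ S j, v a ^ 2 := by field_simp
  -- the trace bound
  have hrow : ∀ a : V, (∑ b, P a b * adjMat G b a) = 1 - ((N (c a) : ℝ))⁻¹ := by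
    intro a
    letI := Classical.decRel G.Adj
    have hterm : ∀ b : V, P a b * adjMat G b a
        = if b ∈ (S (c a)).erase a then ((N (c a) : ℝ))⁻¹ else 0 := by
      intro b
      by_cases hb : b ∈ (S (c a)).erase a
      · obtain ⟨hba, hbS⟩ := Finset.mem_erase.mp hb
        have hcb : c b = c a := (Finset.mem_filter.mp hbS).2
        have hadjba : G.Adj b a := hadj b a hba hcb
        rw [if_pos hb]
        simp [P, adjMat, hcb.symm, hadjba]
      · rw [if_neg hb]
        rcases eq_or_ne b a with rfl | hba
        · simp [adjMat]
        · have hcb : ¬ (c a = c b) := by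
            intro h
            exact hb (Finset.mem_erase.mpr ⟨hba, by
              simp only [S, Finset.mem_filter, Finset.mem_univ, true_and]; exact h.symm⟩)
          simp [P, hcb]
    calc (∑ b, P a b * adjMat G b a)
        = ∑ b, (if b ∈ (S (c a)).erase a then ((N (c a) : ℝ))⁻¹ else 0) :=
          Finset.sum_congr rfl fun b _ => hterm b
      _ = ∑ b ∈ univ ∩ (S (c a)).erase a, ((N (c a) : ℝ))⁻¹ := by
          rw [Finset.sum_ite_mem]
      _ = (((N (c a) - 1 : ℕ)) : ℝ) * ((N (c a) : ℝ))⁻¹ := by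
          rw [Finset.univ_inter, Finset.sum_const, Finset.card_erase_of_mem (hmem a)]
          simp [nsmul_eq_mul]
          exact Or.inl rfl
      _ = 1 - ((N (c a) : ℝ))⁻¹ := by
          have hN0 : ((N (c a) : ℝ)) ≠ 0 := by
            have : (0 : ℝ) < N (c a) := by exact_mod_cast hNpos a
            exact ne_of_gt this
          rw [Nat.cast_sub (hNpos a)]
          field_simp
          simp
  have hfib : (∑ a : V, ((N (c a) : ℝ))⁻¹) ≤ (k : ℝ) := by
    rw [← Finset.sum_fiberwise univ c (fun a => ((N (c a) : ℝ))⁻¹)]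
    calc (∑ j : Fin k, ∑ a ∈ Finset.filter (fun a => c a = j) univ, ((N (c a) : ℝ))⁻¹)
        ≤ ∑ j : Fin k, (1 : ℝ) := by
          apply Finset.sum_le_sum
          intro j _
          have : ∀ a ∈ S j, ((N (c a) : ℝ))⁻¹ = ((N j : ℝ))⁻¹ := by
            intro a ha
            rw [(Finset.mem_filter.mp ha).2]
          rw [Finset.sum_congr rfl this, Finset.sum_const, nsmul_eq_mul]
          rcases Nat.eq_zero_or_pos (N j) with h | h
          · simp [h]
          · have hN0 : ((N j : ℝ)) ≠ 0 := by positivity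
            rw [mul_inv_cancel₀ hN0]
      _ = (k : ℝ) := by simp
  have key1 : (Fintype.card V : ℝ) - (k : ℝ) ≤ (P * adjMat G).trace := by
    have htr : (P * adjMat G).trace = ∑ a : V, (1 - ((N (c a) : ℝ))⁻¹) := by
      simp only [Matrix.trace, Matrix.diag, Matrix.mul_apply]
      exact Finset.sum_congr rfl fun a _ => hrow a
    rw [htr, Finset.sum_sub_distrib]
    simp only [Finset.sum_const, Finset.card_univ, nsmul_eq_mul, mul_one]
    linarith [hfib]
  have key2 := two_mul_trace_le_energy G P h0 h1
  linarith [key1, key2]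

end GraphEnergy
end
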